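/- arXiv:1704.06845 — 7 statements merged into one kernel-verified Lean document; each statement's English description precedes it below -/
import Mathlib

section
/- Let Γ be a group and H ≤ Γ a subgroup of finite index d. For r ∈ ℝ, define φ_r : Γ → ℝ by φ_r(x) = 1 if x ∈ H and φ_r(x) = r otherwise. Then φ_r is positive definite on Γ if and only if -1/(d-1) ≤ r ≤ 1. -/
/-!
Grouping `α` by cosets, let `S c` be the sum of `α` over the part of `s` in the coset `c` and
`T = ∑ c, S c`. The quadratic form of `φ_r` is then `r |T|² + (1 - r) ∑ c, |S c|²`, and
Cauchy–Schwarz `|T|² ≤ d ∑ c, |S c|²` makes it nonnegative when `-1/(d-1) ≤ r ≤ 1`.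
Conversely, `α = δ₁ - δ_g` with `g ∉ H` gives `2 - 2r ≥ 0`, and `α = 1` on a set of coset
representatives gives `d (1 + (d - 1) r) ≥ 0`.
-/

open scoped ComplexOrder

/-- A function `φ : Γ → ℂ` is positive definite if for every finitely supported `α`,
`∑_{x,y} φ(y⁻¹ x) α(x) conj(α(y))` is a nonnegative (real) number. -/
def IsPosDef {Γ : Type*} [Group Γ] (φ : Γ → ℂ) : Prop :=
  ∀ (s : Finset Γ) (α : Γ → ℂ),
    0 ≤ ∑ x ∈ s, ∑ y ∈ s, φ (y⁻¹ * x) * α x * (starRingEnd ℂ) (α y)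

open Finset

theorem Complex.normSq_sum_le_card_mul {ι : Type*} (s : Finset ι) (β : ι → ℂ) :
    Complex.normSq (∑ i ∈ s, β i) ≤ #s * ∑ i ∈ s, Complex.normSq (β i) := by
  simp only [Complex.normSq_eq_norm_sq]
  calc ‖∑ i ∈ s, β i‖ ^ 2 ≤ (∑ i ∈ s, ‖β i‖) ^ 2 := by gcongr; exact norm_sum_le _ _
    _ ≤ #s * ∑ i ∈ s, ‖β i‖ ^ 2 := sq_sum_le_card_mul_sum_sq

theorem IsPosDef.apply_add_apply_inv_le {Γ : Type*} [Group Γ] {φ : Γ → ℂ} (hφ : IsPosDef φ)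
    (g : Γ) : φ g + φ g⁻¹ ≤ 2 * φ 1 := by
  classical
  rcases eq_or_ne g 1 with rfl | hg
  · rw [inv_one, two_mul]
  · have h := hφ {1, g} (fun x => if x = 1 then 1 else -1)
    simp only [sum_pair hg.symm, if_pos, if_neg hg] at h
    rw [← sub_nonneg]
    convert h using 1
    simp only [inv_one, mul_one, map_one, map_neg, mul_neg, one_mul, inv_mul_cancel, neg_neg]
    ring

theorem le_one_of_isPosDef {Γ : Type*} [Group Γ] {H : Subgroup Γ} [DecidablePred (· ∈ H)]
    {r : ℝ} (hH : H ≠ ⊤)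
    (hφ : IsPosDef fun x => if x ∈ H then (1 : ℂ) else r) : r ≤ 1 := by
  obtain ⟨g, hg⟩ := SetLike.exists_not_mem_of_ne_top H hH
  have h := hφ.apply_add_apply_inv_le g
  simp only [hg, inv_mem_iff, one_mem, if_false, if_true, mul_one] at h
  have : r + r ≤ 2 := by exact_mod_cast h
  linarith

section CosetSums

variable {Γ : Type*} [Group Γ] (H : Subgroup Γ) [DecidableEq (Γ ⧸ H)]

noncomputable def cosetSum (s : Finset Γ) (α : Γ → ℂ) (c : Γ ⧸ H) : ℂ :=
  ∑ x ∈ s with QuotientGroup.mk (s := H) x = c, α x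

variable [Fintype (Γ ⧸ H)]

theorem sum_cosetSum (s : Finset Γ) (α : Γ → ℂ) : ∑ c, cosetSum H s α c = ∑ x ∈ s, α x :=
  sum_fiberwise s _ α

theorem sum_sum_ite_coset_eq (s : Finset Γ) (α : Γ → ℂ) :
    ∑ x ∈ s, ∑ y ∈ s, (if (y : Γ ⧸ H) = x then α x * starRingEnd ℂ (α y) else 0) =
      ∑ c, (Complex.normSq (cosetSum H s α c) : ℂ) := by
  calc _ = ∑ x ∈ s, α x * starRingEnd ℂ (cosetSum H s α x) := by
        refine sum_congr rfl fun x _ => ?_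
        rw [← sum_filter, cosetSum, map_sum, mul_sum]
    _ = ∑ c, ∑ x ∈ s with QuotientGroup.mk (s := H) x = c,
          α x * starRingEnd ℂ (cosetSum H s α x) := (sum_fiberwise s _ _).symm
    _ = _ := sum_congr rfl fun c _ => by
        simp only [cosetSum]
        rw [← Complex.mul_conj, sum_mul]
        exact sum_congr rfl fun x hx => by rw [(mem_filter.1 hx).2]

noncomputable def cosetReps : Finset Γ :=
  (univ : Finset (Γ ⧸ H)).map ⟨Quotient.out, Quotient.out_injective⟩

theorem cosetSum_cosetReps_one (c : Γ ⧸ H) : cosetSum H (cosetReps H) 1 c = 1 := by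
  have hfiber : {x ∈ cosetReps H | QuotientGroup.mk (s := H) x = c} = {c.out} := by
    ext x
    simp only [cosetReps, mem_filter, mem_map, mem_univ, true_and, mem_singleton,
      Function.Embedding.coeFn_mk]
    constructor
    · rintro ⟨⟨a, rfl⟩, rfl⟩
      rw [QuotientGroup.out_eq']
    · rintro rfl
      exact ⟨⟨c, rfl⟩, QuotientGroup.out_eq' c⟩
  rw [cosetSum, hfiber, sum_singleton, Pi.one_apply]

variable [DecidablePred (· ∈ H)] (r : ℝ)

theorem sum_sum_ite_mem_mul_conj (s : Finset Γ) (α : Γ → ℂ) :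
    ∑ x ∈ s, ∑ y ∈ s, (if y⁻¹ * x ∈ H then (1 : ℂ) else r) * α x * starRingEnd ℂ (α y) =
      ↑(r * Complex.normSq (∑ x ∈ s, α x) +
        (1 - r) * ∑ c, Complex.normSq (cosetSum H s α c)) := by
  have hsplit : ∀ x y, (if y⁻¹ * x ∈ H then (1 : ℂ) else r) * α x * starRingEnd ℂ (α y) =
      r * (α x * starRingEnd ℂ (α y)) +
        (1 - r) * if (y : Γ ⧸ H) = x then α x * starRingEnd ℂ (α y) else 0 := by
    intro x y
    simp only [← QuotientGroup.eq]
    split_ifs <;> ring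
  simp only [hsplit, sum_add_distrib, ← mul_sum, sum_sum_ite_coset_eq, ← map_sum, ← sum_mul,
    Complex.mul_conj]
  push_cast
  ring

theorem neg_one_le_of_isPosDef (hφ : IsPosDef fun x => if x ∈ H then (1 : ℂ) else r) :
    -1 ≤ r * (Fintype.card (Γ ⧸ H) - 1) := by
  have h := hφ (cosetReps H) 1
  beta_reduce at h
  rw [sum_sum_ite_mem_mul_conj, Complex.zero_le_real, ← sum_cosetSum H] at h
  simp only [cosetSum_cosetReps_one, sum_const, card_univ, map_one, nsmul_eq_mul,
    mul_one, Complex.normSq_natCast] at h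
  have hd : (0 : ℝ) < Fintype.card (Γ ⧸ H) := by exact_mod_cast Fintype.card_pos
  nlinarith

theorem isPosDef_of_neg_one_le (hlow : -1 ≤ r * (Fintype.card (Γ ⧸ H) - 1)) (hup : r ≤ 1) :
    IsPosDef fun x => if x ∈ H then (1 : ℂ) else r := by
  intro s α
  beta_reduce
  rw [sum_sum_ite_mem_mul_conj, Complex.zero_le_real, ← sum_cosetSum H]
  have hCS := Complex.normSq_sum_le_card_mul (univ : Finset (Γ ⧸ H)) (cosetSum H s α)
  rw [card_univ] at hCS
  have hB : 0 ≤ ∑ c, Complex.normSq (cosetSum H s α c) :=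
    sum_nonneg fun c _ => Complex.normSq_nonneg _
  have hT := Complex.normSq_nonneg (∑ c, cosetSum H s α c)
  rcases le_or_gt 0 r with hr | hr <;> nlinarith

end CosetSums

theorem stmt_0 {Γ : Type*} [Group Γ] (H : Subgroup Γ) (d : ℕ) (hd : H.index = d)
    (hd2 : 2 ≤ d) (r : ℝ) [DecidablePred (· ∈ H)] :
    IsPosDef (fun x => if x ∈ H then (1 : ℂ) else (r : ℂ)) ↔
      -1 / (d - 1 : ℝ) ≤ r ∧ r ≤ 1 := by
  classical
  subst hd
  have : H.FiniteIndex := ⟨by omega⟩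
  let := H.fintypeQuotientOfFiniteIndex
  have hcard : (Fintype.card (Γ ⧸ H) : ℝ) = H.index := by
    rw [Subgroup.index_eq_card, Nat.card_eq_fintype_card]
  have hd1 : (0 : ℝ) < H.index - 1 := by
    have : (2 : ℝ) ≤ H.index := by exact_mod_cast hd2
    linarith
  have hH : H ≠ ⊤ := fun hH => by
    rw [← Subgroup.index_eq_one] at hH
    omega
  rw [div_le_iff₀ hd1, ← hcard]
  exact ⟨fun hφ => ⟨neg_one_le_of_isPosDef H r hφ, le_one_of_isPosDef hH hφ⟩,
    fun ⟨hlow, hup⟩ => isPosDef_of_neg_one_le H r hlow hup⟩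
end

section
/- For 0 < p ≤ 1 and t ≥ 0, the function f(x) = exp(-t x^p) on (0,∞) is completely monotone: (-1)^n f^{(n)}(x) ≥ 0 for all n ≥ 0 and x > 0. -/
/-!
Write `f x = exp (-t * x ^ p)`. Up to the sign `(-1) ^ n`, the `n`-th derivative of `f` lies on
`(0, ∞)` in the cone of nonnegative combinations of `x ^ (p * j - n) * f x`, `j ≤ n`. The cone is
carried to the next one by `g ↦ -g'`, because
`-(x ^ (p * j - n) * f x)'`
  `= (n - p * j) * x ^ (p * j - (n + 1)) * f x + t * p * x ^ (p * (j + 1) - (n + 1)) * f x`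
and both coefficients are nonnegative when `0 ≤ p ≤ 1`, `t ≥ 0` and `j ≤ n`.
-/

open Real Set

namespace ExpNegRpow

variable (p t : ℝ)

noncomputable def term (n j : ℕ) : ℝ → ℝ := fun x => x ^ (p * j - n) * exp (-t * x ^ p)

noncomputable def cone (n : ℕ) : PointedCone ℝ (ℝ → ℝ) :=
  PointedCone.hull ℝ (term p t n '' Iic n)

variable {p t}

lemma term_nonneg (n j : ℕ) {x : ℝ} (hx : 0 ≤ x) : 0 ≤ term p t n j x :=
  mul_nonneg (rpow_nonneg hx _) (exp_pos _).le

lemma nonneg_of_mem_cone {n : ℕ} {g : ℝ → ℝ} (hg : g ∈ cone p t n) {x : ℝ} (hx : 0 ≤ x) :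
    0 ≤ g x := by
  induction hg using Submodule.span_induction with
  | mem g hg =>
    obtain ⟨j, -, rfl⟩ := hg
    exact term_nonneg n j hx
  | zero => exact le_rfl
  | add g₁ g₂ _ _ h₁ h₂ => exact add_nonneg h₁ h₂
  | smul c g _ h => exact mul_nonneg c.2 h

lemma hasDerivAt_term (n j : ℕ) {x : ℝ} (hx : 0 < x) :
    HasDerivAt (term p t n j)
      (-((n - p * j) * term p t (n + 1) j x + t * p * term p t (n + 1) (j + 1) x)) x := by
  have hpow := (hasDerivAt_rpow_const (p := p * j - n) (Or.inl hx.ne'))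
  have hexp := ((hasDerivAt_rpow_const (p := p) (Or.inl hx.ne')).const_mul (-t)).exp
  refine (hpow.mul hexp).congr_deriv ?_
  have e1 : p * j - n - 1 = p * j - ↑(n + 1) := by push_cast; ring
  have e2 : p * ↑(j + 1) - ↑(n + 1) = (p * j - n) + (p - 1) := by push_cast; ring
  simp only [term, e1, e2, rpow_add hx]
  ring

lemma term_mem_cone {n j : ℕ} (hj : j ≤ n) : term p t n j ∈ cone p t n :=
  PointedCone.subset_hull ⟨j, hj, rfl⟩

lemma exists_hasDerivAt_neg_of_mem_cone (hp0 : 0 ≤ p) (hp1 : p ≤ 1) (ht : 0 ≤ t) {n : ℕ}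
    {g : ℝ → ℝ} (hg : g ∈ cone p t n) :
    ∃ h ∈ cone p t (n + 1), ∀ x, 0 < x → HasDerivAt g (-h x) x := by
  induction hg using Submodule.span_induction with
  | mem g hg =>
    obtain ⟨j, hj : j ≤ n, rfl⟩ := hg
    have hj' : (j : ℝ) ≤ n := by exact_mod_cast hj
    have hcoeff : 0 ≤ (n : ℝ) - p * j := by nlinarith
    refine ⟨(n - p * j) • term p t (n + 1) j + (t * p) • term p t (n + 1) (j + 1), ?_,
      fun x hx => hasDerivAt_term n j hx⟩
    exact add_mem (PointedCone.smul_mem _ hcoeff (term_mem_cone (by omega)))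
      (PointedCone.smul_mem _ (mul_nonneg ht hp0) (term_mem_cone (by omega)))
  | zero => exact ⟨0, zero_mem _, fun x _ => by simp⟩
  | add g₁ g₂ _ _ h₁ h₂ =>
    obtain ⟨k₁, hk₁, hd₁⟩ := h₁
    obtain ⟨k₂, hk₂, hd₂⟩ := h₂
    exact ⟨k₁ + k₂, add_mem hk₁ hk₂, fun x hx => by
      rw [Pi.add_apply, neg_add]; exact (hd₁ x hx).add (hd₂ x hx)⟩
  | smul c g _ h =>
    obtain ⟨k, hk, hd⟩ := h
    exact ⟨c • k, Submodule.smul_mem _ c hk, fun x hx =>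
      ((hd x hx).const_mul (c : ℝ)).congr_deriv (mul_neg _ _)⟩

lemma exists_iteratedDeriv_eq_neg_one_pow_mul (hp0 : 0 ≤ p) (hp1 : p ≤ 1) (ht : 0 ≤ t) (n : ℕ) :
    ∃ g ∈ cone p t n, ∀ x, 0 < x →
      iteratedDeriv n (fun x : ℝ => exp (-t * x ^ p)) x = (-1) ^ n * g x := by
  induction n with
  | zero => exact ⟨term p t 0 0, term_mem_cone le_rfl, fun x _ => by simp [term]⟩
  | succ n ih =>
    obtain ⟨g, hg, hfg⟩ := ih
    obtain ⟨h, hh, hgh⟩ := exists_hasDerivAt_neg_of_mem_cone hp0 hp1 ht hg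
    refine ⟨h, hh, fun x hx => ?_⟩
    have hloc : iteratedDeriv n (fun x : ℝ => exp (-t * x ^ p)) =ᶠ[nhds x]
        fun y => (-1) ^ n * g y :=
      Filter.eventually_of_mem (Ioi_mem_nhds hx) hfg
    rw [iteratedDeriv_succ, hloc.deriv_eq, ((hgh x hx).const_mul _).deriv, pow_succ]
    ring

end ExpNegRpow

/-- For `0 < p ≤ 1` and `t ≥ 0`, the function `x ↦ exp(-t x^p)` is completely monotone
on `(0,∞)`: `(-1)^n f^{(n)}(x) ≥ 0` for all `n` and all `x > 0`. -/
theorem stmt_4 (p t : ℝ) (hp0 : 0 < p) (hp1 : p ≤ 1) (ht : 0 ≤ t) :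
    ∀ (n : ℕ) (x : ℝ), 0 < x →
      0 ≤ (-1 : ℝ) ^ n * iteratedDeriv n (fun x : ℝ => Real.exp (-t * x ^ p)) x := by
  intro n x hx
  obtain ⟨g, hg, hfg⟩ := ExpNegRpow.exists_iteratedDeriv_eq_neg_one_pow_mul hp0.le hp1 ht n
  rw [hfg x hx, ← mul_assoc, ← mul_pow, neg_one_mul, neg_neg, one_pow, one_mul]
  exact ExpNegRpow.nonneg_of_mem_cone hg hx.le
end

section
/- For p > 1 and t > 0, the function σ ↦ exp(-t |σ|^p) is not positive definite on the infinite symmetric group 𝔖_∞ (with |·| the Coxeter word length with respect to the adjacent transpositions). -/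
open scoped ComplexOrder

/-- The group `𝔖_∞` of finitely supported permutations of `ℕ`. -/
def finSuppPerms : Subgroup (Equiv.Perm ℕ) where
  carrier := {σ | Set.Finite {x | σ x ≠ x}}
  one_mem' := by simp
  mul_mem' := by
    intro a b ha hb
    refine Set.Finite.subset (ha.union hb) ?_
    intro x hx
    simp only [Set.mem_setOf_eq, Set.mem_union, Equiv.Perm.mul_apply] at hx ⊢
    by_contra h
    push_neg at h
    rw [h.2, h.1] at hx
    exact hx rfl
  inv_mem' := by
    intro a ha
    refine Set.Finite.subset ha ?_
    intro x hx
    simp only [Set.mem_setOf_eq] at hx ⊢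
    intro h
    apply hx
    rw [show a⁻¹ x = a⁻¹ (a x) by rw [h], ← Equiv.Perm.mul_apply, inv_mul_cancel, Equiv.Perm.one_apply]

/-- The Coxeter word length of a permutation with respect to the adjacent
transpositions `(n, n+1)`, `n ∈ ℕ`. -/
noncomputable def wordLength (σ : Equiv.Perm ℕ) : ℕ :=
  sInf {n | ∃ l : List ℕ, l.length = n ∧
    σ = (l.map fun i => Equiv.swap i (i + 1)).prod}

/-!
Let `s_a = (2a, 2a+1)`: these are disjoint transpositions of word length `1`, and `s_b s_a` has
word length `2` for `a ≠ b`. For a positive definite `φ` with `φ 1 = 1`, the Cauchy–Schwarz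
inequality between `∑_{a<N} δ_{s_a}` and `δ_1` gives `(N φ(s_a))² ≤ N + N (N - 1) φ(s_b s_a)`.
Letting `N → ∞` forces `e^{-2t} ≤ e^{-t 2^p}`, which fails for `p > 1`.
-/

open Equiv Real

namespace IsPosDef

variable {Γ : Type*} [Group Γ] {ι : Type*} [Fintype ι]

theorem sum_sum_mul_nonneg {φ : Γ → ℂ} (h : IsPosDef φ) (g : ι → Γ) (c : ι → ℂ) :
    0 ≤ ∑ i, ∑ j, φ ((g j)⁻¹ * g i) * c i * starRingEnd ℂ (c j) := by
  classical
  have hfiber : ∀ (d : ι → ℂ) (F : Γ → ℂ),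
      ∑ x ∈ Finset.univ.image g, (∑ i, if g i = x then d i else 0) * F x = ∑ i, d i * F (g i) := by
    intro d F
    simp only [Finset.sum_mul, ite_mul, zero_mul]
    rw [Finset.sum_comm]
    simp
  convert h (Finset.univ.image g) (fun x => ∑ i, if g i = x then c i else 0) using 1
  simp only [map_sum, apply_ite (starRingEnd ℂ), map_zero]
  simp only [mul_comm (φ _), mul_assoc, ← Finset.mul_sum, hfiber]

theorem sq_sum_add_sum_inv_le {φ : Γ → ℝ} (h : IsPosDef fun x => (φ x : ℂ)) (g : ι → Γ) :
    (∑ i, φ (g i) + ∑ i, φ (g i)⁻¹) ^ 2 ≤ 4 * φ 1 * ∑ i, ∑ j, φ ((g j)⁻¹ * g i) := by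
  have hquad : ∀ x : ℝ, 0 ≤ φ 1 * (x * x) + (∑ i, φ (g i) + ∑ i, φ (g i)⁻¹) * x
      + ∑ i, ∑ j, φ ((g j)⁻¹ * g i) := by
    intro x
    have hx := h.sum_sum_mul_nonneg (fun o : Option ι => o.elim 1 g)
      (fun o => o.elim (x : ℂ) fun _ => 1)
    simp only [Fintype.sum_option, Option.elim, inv_one, one_mul, mul_one, Complex.conj_ofReal,
      map_one] at hx
    rw [← Complex.zero_le_real]
    convert hx using 1
    push_cast
    simp only [Finset.sum_add_distrib, ← Finset.sum_mul]
    ring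
  have := discrim_le_zero hquad
  rw [discrim] at this
  linarith

theorem card_mul_sq_le {φ : Γ → ℝ} (h : IsPosDef fun x => (φ x : ℂ)) (hφ1 : φ 1 = 1)
    (g : ι → Γ) {m M : ℝ} (hm0 : 0 ≤ m) (hm : ∀ i, m ≤ φ (g i)) (hm' : ∀ i, m ≤ φ (g i)⁻¹)
    (hM : ∀ i j, i ≠ j → φ ((g j)⁻¹ * g i) ≤ M) :
    (Fintype.card ι * m) ^ 2 ≤ Fintype.card ι + Fintype.card ι * (Fintype.card ι - 1) * M := by
  classical
  set n : ℝ := (Fintype.card ι : ℝ)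
  have hsum : ∀ ψ : ι → ℝ, (∀ i, m ≤ ψ i) → n * m ≤ ∑ i, ψ i := fun ψ hψ => by
    simpa [n] using Finset.card_nsmul_le_sum Finset.univ ψ m fun i _ => hψ i
  have hoff : ∑ i, ∑ j, φ ((g j)⁻¹ * g i) ≤ n + n * (n - 1) * M :=
    calc ∑ i, ∑ j, φ ((g j)⁻¹ * g i) ≤ ∑ i : ι, ∑ j : ι, (M + if j = i then 1 - M else 0) := by
          gcongr with i _ j _
          split_ifs with hji
          · simp [hji, hφ1]
          · simpa using hM i j (Ne.symm hji)
      _ = n + n * (n - 1) * M := by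
          simp [Finset.sum_add_distrib, n]
          ring
  have hCS := h.sq_sum_add_sum_inv_le g
  have hT := hsum _ hm
  have hT' := hsum _ hm'
  rw [hφ1] at hCS
  nlinarith [mul_nonneg (Nat.cast_nonneg (Fintype.card ι) : (0:ℝ) ≤ n) hm0]

end IsPosDef

theorem swap_mem_finSuppPerms (a b : ℕ) : swap a b ∈ finSuppPerms :=
  (Set.toFinite {a, b}).subset fun x hx => by
    by_contra hab
    simp only [Set.mem_insert_iff, Set.mem_singleton_iff, not_or] at hab
    exact hx (swap_apply_of_ne_of_ne hab.1 hab.2)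

theorem wordLength_le_length {σ : Perm ℕ} {l : List ℕ}
    (h : σ = (l.map fun i => swap i (i + 1)).prod) : wordLength σ ≤ l.length :=
  Nat.sInf_le ⟨l, rfl, h⟩

theorem wordLength_one : wordLength 1 = 0 :=
  Nat.le_zero.mp (wordLength_le_length (l := []) rfl)

theorem wordLength_swap_succ_le_one (n : ℕ) : wordLength (swap n (n + 1)) ≤ 1 :=
  wordLength_le_length (l := [n]) (by simp)

theorem exists_list_length_eq_wordLength {σ : Perm ℕ}
    (h : ∃ l : List ℕ, σ = (l.map fun i => swap i (i + 1)).prod) :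
    ∃ l : List ℕ, l.length = wordLength σ ∧ σ = (l.map fun i => swap i (i + 1)).prod := by
  obtain ⟨l, hl⟩ := h
  exact Nat.sInf_mem (s := {n | ∃ l : List ℕ, l.length = n ∧
    σ = (l.map fun i => swap i (i + 1)).prod}) ⟨l.length, l, rfl, hl⟩

theorem prod_swap_succ_apply_of_forall_ne {l : List ℕ} {x : ℕ}
    (h : ∀ c ∈ l, x ≠ c ∧ x ≠ c + 1) : (l.map fun c => swap c (c + 1)).prod x = x := by
  induction l with
  | nil => rfl
  | cons a l ih =>
    rw [List.forall_mem_cons] at h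
    rw [List.map_cons, List.prod_cons, Perm.mul_apply, ih h.2, swap_apply_of_ne_of_ne h.1.1 h.1.2]

/-- A letter `c` of the word that moves `2 * i` is `2 * i - 1` or `2 * i`, so `(c + 1) / 2 = i`. -/
theorem card_le_length_of_apply_two_mul_ne {l : List ℕ} {A : Finset ℕ}
    (hA : ∀ i ∈ A, (l.map fun c => swap c (c + 1)).prod (2 * i) ≠ 2 * i) : A.card ≤ l.length := by
  classical
  calc A.card ≤ (l.map fun c => (c + 1) / 2).toFinset.card := by
        refine Finset.card_le_card fun i hi => ?_
        by_contra hi'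
        refine hA i hi (prod_swap_succ_apply_of_forall_ne fun c hc => ?_)
        have : (c + 1) / 2 ≠ i := fun h => hi' (List.mem_toFinset.mpr (List.mem_map.mpr ⟨c, hc, h⟩))
        omega
    _ ≤ l.length := (List.toFinset_card_le _).trans (List.length_map _).le

theorem card_le_wordLength_of_apply_two_mul_ne {σ : Perm ℕ}
    (hσ : ∃ l : List ℕ, σ = (l.map fun i => swap i (i + 1)).prod) {A : Finset ℕ}
    (hA : ∀ i ∈ A, σ (2 * i) ≠ 2 * i) : A.card ≤ wordLength σ := by
  obtain ⟨l, hl, rfl⟩ := exists_list_length_eq_wordLength hσ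
  exact hl ▸ card_le_length_of_apply_two_mul_ne hA

theorem two_le_wordLength_swap_mul_swap {a b : ℕ} (hab : a ≠ b) :
    2 ≤ wordLength (swap (2 * a) (2 * a + 1) * swap (2 * b) (2 * b + 1)) := by
  have hσ : ∃ l : List ℕ, swap (2 * a) (2 * a + 1) * swap (2 * b) (2 * b + 1) =
      (l.map fun i => swap i (i + 1)).prod := ⟨[2 * a, 2 * b], by simp⟩
  simpa [hab] using card_le_wordLength_of_apply_two_mul_ne hσ (A := {a, b}) (by
    simp only [Finset.mem_insert, Finset.mem_singleton, Perm.mul_apply, swap_apply_def]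
    rintro i (rfl | rfl) <;> split_ifs <;> omega)

def pairSwap (a : ℕ) : finSuppPerms := ⟨swap (2 * a) (2 * a + 1), swap_mem_finSuppPerms _ _⟩

theorem pairSwap_inv (a : ℕ) : (pairSwap a)⁻¹ = pairSwap a :=
  Subtype.ext (swap_inv _ _)

theorem exp_neg_mul_rpow_le_of_le {t p x y : ℝ} (ht : 0 ≤ t) (hp : 0 ≤ p) (hx : 0 ≤ x)
    (hxy : x ≤ y) : exp (-t * y ^ p) ≤ exp (-t * x ^ p) := by
  rw [neg_mul, neg_mul]
  gcongr

theorem exp_neg_mul_two_rpow_lt_sq {t p : ℝ} (ht : 0 < t) (hp : 1 < p) :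
    exp (-t * 2 ^ p) < exp (-t) ^ 2 := by
  have h2p : (2 : ℝ) < 2 ^ p := by
    simpa using rpow_lt_rpow_of_exponent_lt one_lt_two hp
  rw [← exp_nat_mul, exp_lt_exp]
  push_cast
  nlinarith

/-- For `p > 1` and `t > 0`, the function `σ ↦ exp(-t |σ|^p)` is not positive definite
on `𝔖_∞`. -/
theorem stmt_5 (p t : ℝ) (hp : 1 < p) (ht : 0 < t) :
    ¬ IsPosDef (fun σ : finSuppPerms =>
      (Real.exp (-t * (wordLength (σ : Equiv.Perm ℕ) : ℝ) ^ p) : ℂ)) := by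
  intro hPD
  set φ : finSuppPerms → ℝ := fun σ => exp (-t * (wordLength (σ : Perm ℕ) : ℝ) ^ p)
  have hφ1 : φ 1 = 1 := by
    simp [φ, wordLength_one, zero_rpow (by linarith : p ≠ 0)]
  have hp0 : 0 ≤ p := by linarith
  have hφ_pairSwap (a : ℕ) : exp (-t) ≤ φ (pairSwap a) := by
    have hlen : (wordLength (pairSwap a : Perm ℕ) : ℝ) ≤ 1 := by
      exact_mod_cast wordLength_swap_succ_le_one (2 * a)
    calc exp (-t) = exp (-t * 1 ^ p) := by rw [one_rpow, mul_one]
      _ ≤ φ (pairSwap a) := exp_neg_mul_rpow_le_of_le ht.le hp0 (Nat.cast_nonneg _) hlen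
  have hφ_pairSwap_mul {a b : ℕ} (hab : a ≠ b) :
      φ ((pairSwap b)⁻¹ * pairSwap a) ≤ exp (-t * 2 ^ p) := by
    refine exp_neg_mul_rpow_le_of_le ht.le hp0 zero_le_two ?_
    rw [pairSwap_inv]
    exact_mod_cast two_le_wordLength_swap_mul_swap (Ne.symm hab)
  set δ := exp (-t) ^ 2 - exp (-t * 2 ^ p)
  have hδ : 0 < δ := sub_pos.mpr (exp_neg_mul_two_rpow_lt_sq ht hp)
  obtain ⟨N, hN⟩ := exists_nat_gt (1 / δ)
  have hCS := IsPosDef.card_mul_sq_le (φ := φ) hPD hφ1 (fun a : Fin N => pairSwap a)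
    (exp_pos _).le (fun a => hφ_pairSwap a) (fun a => pairSwap_inv a ▸ hφ_pairSwap a)
    (fun a b hab => hφ_pairSwap_mul (Fin.val_injective.ne hab))
  rw [Fintype.card_fin] at hCS
  have hN1 : 1 < N * δ := by rwa [div_lt_iff₀ hδ] at hN
  nlinarith [exp_pos (-t * 2 ^ p)]
end

section
/- Let W be a finite Coxeter group with longest element ω₀. The following are equivalent: (a) for every 0 ≤ q ≤ 1 the function w ↦ q^{|w|} is positive definite on W; (b) the function w ↦ |ω₀|/2 − |w| is positive definite on W. -/
open scoped ComplexOrder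

/-!
(b) ⇒ (a): for `0 < q ≤ 1` and `t = -log q ≥ 0` we have
`q ^ |w| = q ^ (|ω₀|/2) * exp (t (|ω₀|/2 - |w|))`. Positive definite functions are closed under
sums, nonnegative multiples, Schur products and pointwise limits, hence under `exp` (as the limit
of `(1 + φ/n) ^ n`); the case `q = 0` is the limit `q → 0⁺`.

(a) ⇒ (b): for `α` with `∑ α = 0`, `f q = ∑ q ^ |y⁻¹x| α x conj (α y)` is `≥ 0` on `(0, 1)` and
vanishes at `q = 1`, so `f' 1 = ∑ |y⁻¹x| α x conj (α y) ≤ 0`. Every reflection is a left inversion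
of exactly half of `W` and of `ω₀`, and `|w|` counts the left inversions of `w` (strong exchange),
so the mean of `|w|` over `W` is `|ω₀|/2`. Hence `|ω₀|/2 - |w|` has vanishing row sums: its
quadratic form only sees the mean-zero part of `α`, on which it equals `-f' 1 ≥ 0`.
-/

open Filter Topology Finset

theorem Finset.sum_sum_mul_conj {ι : Type*} (s : Finset ι) (α : ι → ℂ) :
    ∑ x ∈ s, ∑ y ∈ s, α x * starRingEnd ℂ (α y) =
      (∑ x ∈ s, α x) * starRingEnd ℂ (∑ x ∈ s, α x) := by
  rw [map_sum, sum_mul_sum]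

section PosDef

variable {G : Type*} [Group G]

theorem Fintype.sum_inv_mul_left [Fintype G] {M : Type*} [AddCommMonoid M] (f : G → M) (y : G) :
    ∑ x, f (y⁻¹ * x) = ∑ w, f w :=
  Equiv.sum_comp (Equiv.mulLeft y⁻¹) f

theorem Fintype.sum_inv_mul_right [Fintype G] {M : Type*} [AddCommMonoid M] (f : G → M) (x : G) :
    ∑ y, f (y⁻¹ * x) = ∑ w, f w :=
  Equiv.sum_comp ((Equiv.inv G).trans (Equiv.mulRight x)) f

def kernelMatrix (φ : G → ℂ) : Matrix G G ℂ :=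
  Matrix.of fun x y => φ (x⁻¹ * y)

variable {φ ψ : G → ℂ}

theorem finsuppSum_kernelMatrix_eq (φ : G → ℂ) (v : G →₀ ℂ) {s : Finset G}
    (hs : v.support ⊆ s) :
    (v.sum fun i vi => v.sum fun j vj => star vi * kernelMatrix φ i j * vj) =
      ∑ x ∈ s, ∑ y ∈ s, φ (y⁻¹ * x) * v x * starRingEnd ℂ (v y) := by
  rw [Finsupp.sum_of_support_subset v hs _ (by simp), Finset.sum_comm]
  refine sum_congr rfl fun x _ => ?_
  rw [Finsupp.sum_of_support_subset v hs _ (by simp)]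
  refine sum_congr rfl fun y _ => ?_
  simp only [RCLike.star_def, kernelMatrix, Matrix.of_apply]
  ring

theorem isPosDef_iff_forall_finsupp : IsPosDef φ ↔
    ∀ v : G →₀ ℂ, 0 ≤ v.sum fun i vi => v.sum fun j vj => star vi * kernelMatrix φ i j * vj := by
  classical
  refine ⟨fun h v => ?_, fun h s α => ?_⟩
  · rw [finsuppSum_kernelMatrix_eq φ v subset_rfl]
    exact h _ _
  · have hv := h (Finsupp.indicator s fun g _ => α g)
    rw [finsuppSum_kernelMatrix_eq φ _ (Finsupp.support_indicator_subset _ _)] at hv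
    convert hv using 3 with x hx y hy
    simp [Finsupp.indicator_apply, hx, hy]

theorem isHermitian_kernelMatrix (hφ : ∀ w, φ w⁻¹ = star (φ w)) :
    (kernelMatrix φ).IsHermitian := by
  ext x y
  simp [kernelMatrix, ← hφ]

theorem isPosDef_iff_posSemidef_kernelMatrix (hφ : ∀ w, φ w⁻¹ = star (φ w)) :
    IsPosDef φ ↔ (kernelMatrix φ).PosSemidef := by
  rw [isPosDef_iff_forall_finsupp, Matrix.PosSemidef, and_iff_right (isHermitian_kernelMatrix hφ)]

namespace IsPosDef

theorem of_tendsto {ι : Type*} {l : Filter ι} [l.NeBot] {F : ι → G → ℂ}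
    (hF : ∀ᶠ i in l, IsPosDef (F i)) (hlim : ∀ w, Tendsto (fun i => F i w) l (𝓝 (φ w))) :
    IsPosDef φ := fun s α =>
  ge_of_tendsto (tendsto_finsetSum _ fun _ _ => tendsto_finsetSum _ fun _ _ =>
    ((hlim _).mul_const _).mul_const _) (hF.mono fun _ hi => hi s α)

theorem add (hφ : IsPosDef φ) (hψ : IsPosDef ψ) : IsPosDef (φ + ψ) := fun s α => by
  simpa only [Pi.add_apply, add_mul, sum_add_distrib] using add_nonneg (hφ s α) (hψ s α)

theorem const_mul {c : ℂ} (hc : 0 ≤ c) (hφ : IsPosDef φ) : IsPosDef fun w => c * φ w :=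
  fun s α => by simpa only [mul_sum, mul_assoc] using mul_nonneg hc (hφ s α)

theorem one : IsPosDef (1 : G → ℂ) := fun s α => by
  simpa [sum_sum_mul_conj] using mul_star_self_nonneg (∑ x ∈ s, α x)

theorem mul (hφ : IsPosDef φ) (hψ : IsPosDef ψ) (hφ' : ∀ w, φ w⁻¹ = star (φ w))
    (hψ' : ∀ w, ψ w⁻¹ = star (ψ w)) : IsPosDef (φ * ψ) :=
  (isPosDef_iff_posSemidef_kernelMatrix fun w => by simp [hφ', hψ']).mpr <|
    ((isPosDef_iff_posSemidef_kernelMatrix hφ').mp hφ).hadamard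
      ((isPosDef_iff_posSemidef_kernelMatrix hψ').mp hψ)

theorem pow (hφ : IsPosDef φ) (hφ' : ∀ w, φ w⁻¹ = star (φ w)) (n : ℕ) : IsPosDef (φ ^ n) := by
  induction n with
  | zero => exact pow_zero φ ▸ one
  | succ n ih => exact pow_succ φ n ▸ ih.mul hφ (fun w => by simp [hφ']) hφ'

theorem exp (hφ : IsPosDef φ) (hφ' : ∀ w, φ w⁻¹ = star (φ w)) :
    IsPosDef fun w => Complex.exp (φ w) := by
  refine of_tendsto (l := (atTop : Filter ℕ)) (F := fun n => (1 + fun w => (n : ℂ)⁻¹ * φ w) ^ n)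
    (Eventually.of_forall fun n => ?_) fun w => ?_
  · exact (one.add (hφ.const_mul (inv_nonneg.mpr (Nat.cast_nonneg n)))).pow
      (fun w => by simp [hφ']) n
  · simpa [div_eq_inv_mul] using Complex.tendsto_one_add_div_pow_exp (φ w)

theorem of_forall_sum_univ [Fintype G]
    (h : ∀ α : G → ℂ, 0 ≤ ∑ x, ∑ y, φ (y⁻¹ * x) * α x * starRingEnd ℂ (α y)) : IsPosDef φ := by
  classical
  intro s α
  simpa [mul_ite, ite_mul, apply_ite (starRingEnd ℂ), sum_ite_mem] using
    h fun g => if g ∈ s then α g else 0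

end IsPosDef

theorem isPosDef_pow_of_isPosDef_sub {L : G → ℕ} (hL : ∀ w, L w⁻¹ = L w) {c : ℝ}
    (h : IsPosDef fun w => ((c - L w : ℝ) : ℂ)) {q : ℝ} (hq0 : 0 ≤ q) (hq1 : q ≤ 1) :
    IsPosDef fun w => ((q ^ L w : ℝ) : ℂ) := by
  have hpos {q : ℝ} (hq0 : 0 < q) (hq1 : q ≤ 1) : IsPosDef fun w => ((q ^ L w : ℝ) : ℂ) := by
    set t := -Real.log q
    have ht : 0 ≤ t := neg_nonneg.mpr (Real.log_nonpos hq0.le hq1)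
    have hexp := (h.const_mul (Complex.zero_le_real.mpr ht)).exp (fun w => by simp [hL])
    convert hexp.const_mul (Complex.zero_le_real.mpr (Real.exp_pos (-(t * c))).le) using 2 with w
    rw [← Complex.ofReal_mul, ← Complex.ofReal_exp, ← Complex.ofReal_mul, ← Real.exp_add,
      show -(t * c) + t * (c - L w) = L w * Real.log q by ring, Real.exp_nat_mul, Real.exp_log hq0]
  rcases hq0.eq_or_lt with rfl | hq0
  · refine IsPosDef.of_tendsto (l := 𝓝[>] (0 : ℝ)) (F := fun q w => ((q ^ L w : ℝ) : ℂ))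
      ?_ fun w => ?_
    · filter_upwards [Ioo_mem_nhdsGT zero_lt_one] with q hq using hpos hq.1 hq.2.le
    · exact ((Complex.continuous_ofReal.comp (continuous_pow (L w))).tendsto 0).mono_left
        nhdsWithin_le_nhds
  · exact hpos hq0 hq1

theorem sum_sum_natCast_mul_nonpos_of_isPosDef_pow {L : G → ℕ}
    (h : ∀ q : ℝ, 0 < q → q < 1 → IsPosDef fun w => ((q ^ L w : ℝ) : ℂ))
    {s : Finset G} {α : G → ℂ} (hα : ∑ x ∈ s, α x = 0) :
    ∑ x ∈ s, ∑ y ∈ s, (L (y⁻¹ * x) : ℂ) * α x * starRingEnd ℂ (α y) ≤ 0 := by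
  set f : ℝ → ℂ := fun q =>
    ∑ x ∈ s, ∑ y ∈ s, ((q ^ L (y⁻¹ * x) : ℝ) : ℂ) * α x * starRingEnd ℂ (α y)
  have hf1 : f 1 = 0 := by simp [f, sum_sum_mul_conj, hα]
  have hderiv : HasDerivAt f
      (∑ x ∈ s, ∑ y ∈ s, (L (y⁻¹ * x) : ℂ) * α x * starRingEnd ℂ (α y)) 1 := by
    refine HasDerivAt.fun_sum fun x _ => HasDerivAt.fun_sum fun y _ => ?_
    simpa using (((hasDerivAt_pow (L (y⁻¹ * x)) (1 : ℝ)).ofReal_comp).mul_const (α x)).mul_const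
      (starRingEnd ℂ (α y))
  have hslope : Tendsto (slope f 1) (𝓝[<] (1 : ℝ)) (𝓝 _) :=
    (hasDerivAt_iff_tendsto_slope.mp hderiv).mono_left
      (nhdsWithin_mono _ fun q (hq : q < 1) => hq.ne)
  refine le_of_tendsto hslope ?_
  filter_upwards [Ioo_mem_nhdsLT zero_lt_one] with q hq
  rw [slope_def_module, hf1, sub_zero, Complex.real_smul]
  exact mul_nonpos_of_nonpos_of_nonneg
    (Complex.real_le_real.mpr (inv_nonpos.mpr (sub_nonpos.mpr hq.2.le))) (h q hq.1 hq.2 s α)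

theorem sum_sum_sub_const_eq_of_sum_eq_zero [Fintype G] {r : G → ℂ} (hr : ∑ w, r w = 0)
    (α : G → ℂ) (m : ℂ) :
    ∑ x, ∑ y, r (y⁻¹ * x) * (α x - m) * starRingEnd ℂ (α y - m) =
      ∑ x, ∑ y, r (y⁻¹ * x) * α x * starRingEnd ℂ (α y) := by
  have hexpand : ∀ x y, r (y⁻¹ * x) * (α x - m) * starRingEnd ℂ (α y - m) =
      r (y⁻¹ * x) * α x * starRingEnd ℂ (α y) - r (y⁻¹ * x) * (m * starRingEnd ℂ (α y - m)) -
        r (y⁻¹ * x) * (α x * starRingEnd ℂ m) := by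
    intro x y
    simp only [map_sub]
    ring
  simp only [hexpand, sum_sub_distrib]
  rw [Finset.sum_comm (f := fun x y => r (y⁻¹ * x) * (m * starRingEnd ℂ (α y - m)))]
  simp [← sum_mul, Fintype.sum_inv_mul_left, Fintype.sum_inv_mul_right, hr]

theorem isPosDef_sub_of_isPosDef_pow [Fintype G] {L : G → ℕ} {c : ℝ}
    (hc : ∑ w, (L w : ℝ) = Fintype.card G * c)
    (h : ∀ q : ℝ, 0 < q → q < 1 → IsPosDef fun w => ((q ^ L w : ℝ) : ℂ)) :
    IsPosDef fun w => ((c - L w : ℝ) : ℂ) := by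
  set r : G → ℂ := fun w => ((c - L w : ℝ) : ℂ)
  have hr : ∑ w, r w = 0 := by
    simp only [r, ← Complex.ofReal_sum, sum_sub_distrib, hc, sum_const, card_univ, nsmul_eq_mul,
      sub_self, Complex.ofReal_zero]
  refine IsPosDef.of_forall_sum_univ fun α => ?_
  set α₀ : G → ℂ := fun x => α x - (∑ x, α x) / Fintype.card G
  have hα₀ : ∑ x, α₀ x = 0 := by
    have hcard : (Fintype.card G : ℂ) ≠ 0 := Nat.cast_ne_zero.mpr Fintype.card_ne_zero
    simp [α₀, sum_sub_distrib, mul_div_cancel₀ _ hcard]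
  have hsplit : ∑ x, ∑ y, r (y⁻¹ * x) * α₀ x * starRingEnd ℂ (α₀ y) =
      c * ((∑ x, α₀ x) * starRingEnd ℂ (∑ x, α₀ x)) -
        ∑ x, ∑ y, (L (y⁻¹ * x) : ℂ) * α₀ x * starRingEnd ℂ (α₀ y) := by
    simp only [← sum_sum_mul_conj, mul_sum, ← sum_sub_distrib, r]
    refine sum_congr rfl fun x _ => sum_congr rfl fun y _ => ?_
    push_cast
    ring
  rw [← sum_sum_sub_const_eq_of_sum_eq_zero hr, hsplit, hα₀, zero_mul, mul_zero, zero_sub,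
    neg_nonneg]
  exact sum_sum_natCast_mul_nonpos_of_isPosDef_pow h hα₀

end PosDef

theorem List.even_count_of_getElem_add_eq {α : Type*} [BEq α] (l : List α) {m : ℕ}
    (hl : l.length = 2 * m) (h : ∀ k (hk : k < m), l[k] = l[k + m]) (a : α) :
    Even (l.count a) := by
  have hdrop : l.drop m = l.take m := by
    apply List.ext_getElem (by simp; omega)
    intro k h₁ h₂
    simp only [List.getElem_drop, List.getElem_take, add_comm m k]
    exact (h k (by simp at h₂; omega)).symm
  rw [← List.take_append_drop m l, hdrop, List.count_append]
  exact ⟨_, rfl⟩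

namespace CoxeterSystem

variable {B W : Type*} [Group W] {M : CoxeterMatrix B} (cs : CoxeterSystem M W)

local prefix:100 "s " => cs.simple
local prefix:100 "π " => cs.wordProd
local prefix:100 "ℓ " => cs.length
local prefix:100 "lis " => cs.leftInvSeq

theorem prod_map_alternatingWord_two_mul {G : Type*} [Monoid G] (f : B → G) (i j : B) (m : ℕ) :
    ((alternatingWord i j (2 * m)).map f).prod = (f i * f j) ^ m := by
  induction m with
  | zero => simp [alternatingWord]
  | succ m ih =>
    rw [show 2 * (m + 1) = 2 * m + 1 + 1 by ring, alternatingWord_succ, alternatingWord_succ,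
      pow_succ, ← ih]
    simp

theorem wordProd_alternatingWord_add_two_mul (i j : B) (n : ℕ) :
    π (alternatingWord i j (n + 2 * M i j)) = π (alternatingWord i j n) := by
  simp only [prod_alternatingWord_eq_mul_pow, Nat.even_add, even_two_mul, iff_true,
    show (n + 2 * M i j) / 2 = n / 2 + M i j by omega, pow_add, cs.simple_mul_simple_pow, mul_one]

theorem simple_mul_mul_simple_eq_simple_iff {i : B} {x : W} : s i * x * s i = s i ↔ x = s i := by
  rw [mul_assoc, mul_eq_left, mul_eq_one_iff_eq_inv, inv_simple]

section SignAction

variable [DecidableEq W]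

theorem even_count_leftInvSeq_alternatingWord (i j : B) (t : W) :
    Even ((lis (alternatingWord i j (2 * M i j))).count t) := by
  refine List.even_count_of_getElem_add_eq _ (m := M i j) (by simp) (fun k hk => ?_) t
  rw [getElem_leftInvSeq_alternatingWord cs i j _ k (by omega),
    getElem_leftInvSeq_alternatingWord cs i j _ (k + M i j) (by omega),
    show 2 * (k + M i j) + 1 = 2 * k + 1 + 2 * M j i by rw [M.symmetric]; ring,
    wordProd_alternatingWord_add_two_mul]

/-- Lifting these to `W` (`signAction`) shows that the parity of the number of occurrences of `t`
in the left inversion sequence of a word depends only on the element the word represents. -/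
noncomputable def signPerm (i : B) : Equiv.Perm (W × ℤˣ) :=
  Function.Involutive.toPerm
    (fun p => (s i * p.1 * s i, if p.1 = s i then -p.2 else p.2)) (by
      rintro ⟨x, ε⟩
      have hx : s i * (s i * x * s i) * s i = x := by simp [mul_assoc]
      by_cases h : x = s i <;> simp [h, hx, cs.simple_mul_mul_simple_eq_simple_iff])

theorem signPerm_apply (i : B) (x : W) (ε : ℤˣ) :
    cs.signPerm i (x, ε) = (s i * x * s i, if x = s i then -ε else ε) := rfl

theorem prod_map_signPerm (ω : List B) (x : W) (ε : ℤˣ) :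
    (ω.map cs.signPerm).prod (x, ε) =
      (π ω * x * (π ω)⁻¹, ε * (-1) ^ (lis ω).count (π ω * x * (π ω)⁻¹)) := by
  induction ω using List.reverseRecOn generalizing x ε with
  | nil => simp
  | append_singleton ω i ih =>
    have hlis := cs.leftInvSeq_concat ω i
    simp only [List.concat_eq_append] at hlis
    have hconj : π ω * (s i * x * s i) * (π ω)⁻¹ = π (ω ++ [i]) * x * (π (ω ++ [i]))⁻¹ := by
      simp [wordProd_append, mul_assoc]
    have hiff : π ω * s i * (π ω)⁻¹ = π (ω ++ [i]) * x * (π (ω ++ [i]))⁻¹ ↔ x = s i := by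
      rw [← hconj, mul_left_inj, mul_right_inj, eq_comm, simple_mul_mul_simple_eq_simple_iff]
    rw [List.map_append, List.prod_append, Equiv.Perm.mul_apply, List.map_singleton,
      List.prod_singleton, signPerm_apply, ih, hconj, hlis, List.count_append,
      List.count_singleton, pow_add]
    simp only [beq_iff_eq, hiff]
    by_cases h : x = s i <;> simp [h]

theorem isLiftable_signPerm : M.IsLiftable cs.signPerm := by
  intro i j
  rw [← prod_map_alternatingWord_two_mul]
  ext ⟨x, ε⟩ : 1
  have hone : π (alternatingWord i j (2 * M i j)) = 1 := by
    simpa [alternatingWord] using cs.wordProd_alternatingWord_add_two_mul i j 0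
  obtain ⟨c, hc⟩ := cs.even_count_leftInvSeq_alternatingWord i j x
  simp only [prod_map_signPerm, hone, one_mul, inv_one, mul_one, hc, ← two_mul, pow_mul]
  simp

noncomputable def signAction : W →* Equiv.Perm (W × ℤˣ) :=
  cs.lift ⟨cs.signPerm, cs.isLiftable_signPerm⟩

theorem signAction_wordProd (ω : List B) (x : W) (ε : ℤˣ) :
    cs.signAction (π ω) (x, ε) =
      (π ω * x * (π ω)⁻¹, ε * (-1) ^ (lis ω).count (π ω * x * (π ω)⁻¹)) := by
  rw [← prod_map_signPerm, wordProd, map_list_prod, List.map_map]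
  congr 3
  funext i
  exact cs.lift_apply_simple cs.isLiftable_signPerm i

noncomputable def inversionSign (w t : W) : ℤˣ := (cs.signAction w (w⁻¹ * t * w, 1)).2

theorem inversionSign_wordProd (ω : List B) (t : W) :
    cs.inversionSign (π ω) t = (-1) ^ (lis ω).count t := by
  simp [inversionSign, signAction_wordProd, mul_assoc]

theorem signAction_apply (w x : W) (ε : ℤˣ) :
    cs.signAction w (x, ε) = (w * x * w⁻¹, ε * cs.inversionSign w (w * x * w⁻¹)) := by
  obtain ⟨ω, rfl⟩ := cs.wordProd_surjective w
  rw [signAction_wordProd, inversionSign_wordProd]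

theorem inversionSign_mul (u v t : W) :
    cs.inversionSign (u * v) t = cs.inversionSign u t * cs.inversionSign v (u⁻¹ * t * u) := by
  have hv : cs.signAction v ((u * v)⁻¹ * t * (u * v), 1) =
      (u⁻¹ * t * u, cs.inversionSign v (u⁻¹ * t * u)) := by
    rw [signAction_apply, one_mul]
    congr 1 <;> group
  have hu (σ : ℤˣ) : cs.signAction u (u⁻¹ * t * u, σ) = (t, σ * cs.inversionSign u t) := by
    rw [signAction_apply]
    congr 1 <;> group
  rw [inversionSign, map_mul, Equiv.Perm.mul_apply, hv, hu, mul_comm]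

theorem inversionSign_one (t : W) : cs.inversionSign 1 t = 1 := by
  simpa using cs.inversionSign_wordProd [] t

theorem inversionSign_simple_self (i : B) : cs.inversionSign (s i) (s i) = -1 := by
  simpa using cs.inversionSign_wordProd [i] (s i)

theorem IsReflection.inversionSign_self {t : W} (ht : cs.IsReflection t) :
    cs.inversionSign t t = -1 := by
  obtain ⟨u, i, rfl⟩ := ht
  set t := u * s i * u⁻¹
  have hu : u⁻¹ * t * u = s i := by simp [t, mul_assoc]
  have hus : (u * s i)⁻¹ * t * (u * s i) = s i := by simp [t, mul_assoc]
  have hinv := cs.inversionSign_mul u u⁻¹ t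
  rw [mul_inv_cancel, inversionSign_one, hu] at hinv
  rw [inversionSign_mul, inversionSign_mul, hus, hu, inversionSign_simple_self, mul_right_comm,
    ← hinv, mul_neg_one]

theorem IsReflection.inversionSign_mul_self {t : W} (ht : cs.IsReflection t) (w : W) :
    cs.inversionSign (t * w) t = -cs.inversionSign w t := by
  rw [inversionSign_mul, ht.inversionSign_self, inv_mul_cancel, one_mul, neg_one_mul]

theorem isLeftInversion_of_inversionSign_eq_neg_one {w t : W}
    (h : cs.inversionSign w t = -1) : cs.IsLeftInversion w t := by
  obtain ⟨ω, hω, rfl⟩ := cs.exists_isReduced w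
  refine cs.isLeftInversion_of_mem_leftInvSeq hω (List.count_pos_iff.mp (Nat.pos_of_ne_zero ?_))
  intro h0
  rw [inversionSign_wordProd, h0, pow_zero] at h
  exact absurd h (by decide)

end SignAction

/-- The strong exchange condition. -/
theorem mem_leftInvSeq_of_isLeftInversion {ω : List B} {t : W}
    (ht : cs.IsLeftInversion (π ω) t) : t ∈ lis ω := by
  classical
  by_contra hmem
  have hsign : cs.inversionSign (π ω) t = 1 := by
    rw [inversionSign_wordProd, List.count_eq_zero_of_not_mem hmem, pow_zero]
  have := cs.isLeftInversion_of_inversionSign_eq_neg_one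
    (by rw [ht.1.inversionSign_mul_self, hsign] : cs.inversionSign (t * π ω) t = -1)
  exact ht.1.isLeftInversion_mul_right_iff.mp this ht

section Counting

open scoped Classical

variable [Fintype W]

theorem card_filter_isLeftInversion (w : W) : #{t | cs.IsLeftInversion w t} = ℓ w := by
  obtain ⟨ω, hω, rfl⟩ := cs.exists_isReduced w
  have hfilter : filter (cs.IsLeftInversion (π ω)) univ = (lis ω).toFinset := by
    ext t
    simpa using ⟨cs.mem_leftInvSeq_of_isLeftInversion, cs.isLeftInversion_of_mem_leftInvSeq hω⟩
  rw [hfilter, List.toFinset_card_of_nodup hω.nodup_leftInvSeq, length_leftInvSeq, hω]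

theorem IsReflection.two_mul_card_filter_isLeftInversion {t : W} (ht : cs.IsReflection t) :
    2 * #{w | cs.IsLeftInversion w t} = Fintype.card W := by
  have hswap : #{w | ¬cs.IsLeftInversion w t} = #{w | cs.IsLeftInversion w t} := by
    refine card_nbij' (t * ·) (t * ·) ?_ ?_ ?_ ?_ <;> intro w <;>
      simp [ht.isLeftInversion_mul_right_iff, ← mul_assoc, ht.mul_self]
  rw [two_mul]
  nth_rw 2 [← hswap]
  rw [card_filter_add_card_filter_not, card_univ]

theorem two_mul_sum_length {ω₀ : W} (hω₀ : ∀ w, w ≠ ω₀ → ℓ w < ℓ ω₀) :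
    2 * ∑ w, ℓ w = Fintype.card W * ℓ ω₀ := by
  have hinv : filter (cs.IsLeftInversion ω₀) univ = filter cs.IsReflection univ := by
    ext t
    simp only [mem_filter, mem_univ, true_and]
    refine ⟨And.left, fun ht => ⟨ht, hω₀ _ fun h => ?_⟩⟩
    have := ht.odd_length
    rw [mul_eq_right.mp h, length_one] at this
    exact Nat.not_odd_zero this
  calc 2 * ∑ w, ℓ w
      = 2 * ∑ w, #{t | cs.IsLeftInversion w t} := by simp only [card_filter_isLeftInversion]
    _ = ∑ t, 2 * #{w | cs.IsLeftInversion w t} := by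
      rw [← mul_sum]
      exact congrArg _ (sum_card_bipartiteAbove_eq_sum_card_bipartiteBelow _)
    _ = ∑ t, if cs.IsReflection t then Fintype.card W else 0 := by
      refine sum_congr rfl fun t _ => ?_
      split_ifs with ht
      · exact ht.two_mul_card_filter_isLeftInversion
      · rw [filter_false_of_mem fun w _ h => ht h.1, card_empty, mul_zero]
    _ = Fintype.card W * ℓ ω₀ := by
      rw [sum_ite, sum_const_zero, add_zero, sum_const, smul_eq_mul,
        ← card_filter_isLeftInversion, hinv, mul_comm]

end Counting

end CoxeterSystem

/-- For a finite Coxeter group `W` with (unique) longest element `ω₀`, the following are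
equivalent: (a) for every `0 ≤ q ≤ 1` the function `w ↦ q^{|w|}` is positive definite;
(b) the function `w ↦ |ω₀|/2 − |w|` is positive definite. -/
theorem stmt_6 {B W : Type*} [Group W] [Finite W] {M : CoxeterMatrix B}
    (cs : CoxeterSystem M W) (ω₀ : W)
    (hlongest : ∀ w : W, w ≠ ω₀ → cs.length w < cs.length ω₀) :
    (∀ q : ℝ, 0 ≤ q → q ≤ 1 →
        IsPosDef (fun w : W => ((q ^ cs.length w : ℝ) : ℂ))) ↔
      IsPosDef (fun w : W =>
        (((cs.length ω₀ : ℝ) / 2 - (cs.length w : ℝ)) : ℂ)) := by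
  have := Fintype.ofFinite W
  have hmean : ∑ w, (cs.length w : ℝ) = Fintype.card W * ((cs.length ω₀ : ℝ) / 2) := by
    have h : (2 * ∑ w, cs.length w : ℝ) = Fintype.card W * cs.length ω₀ := by
      exact_mod_cast cs.two_mul_sum_length hlongest
    rw [← Nat.cast_sum]
    linarith
  have hcast : (fun w : W => (((cs.length ω₀ : ℝ) / 2 - (cs.length w : ℝ)) : ℂ)) =
      fun w => (((cs.length ω₀ : ℝ) / 2 - cs.length w : ℝ) : ℂ) := by
    push_cast
    rfl
  rw [hcast]
  exact ⟨fun ha => isPosDef_sub_of_isPosDef_pow hmean fun q hq0 hq1 => ha q hq0.le hq1.le,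
    fun hb q hq0 hq1 => isPosDef_pow_of_isPosDef_sub cs.length_inv hb hq0 hq1⟩
end

section
/- Let (W,S) be a Coxeter system containing distinct generators s_0, s_1, …, s_n ∈ S with m(s_0, s_k) > 2 for 1 ≤ k ≤ n. If the function w ↦ r^{‖w‖} is positive definite on W, then r³ ≥ -1/(n-1). -/
open scoped ComplexOrder

variable {B W : Type*} [Group W] {M : CoxeterMatrix B}

/-- The (standard) parabolic subgroup generated by the simple reflections indexed by `T`. -/
def parabolic (cs : CoxeterSystem M W) (T : Set B) : Subgroup W :=
  Subgroup.closure (cs.simple '' T)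

/-- The colour `S_w` of `w`: `s ∈ S_w` iff `w ∉ W_{S∖{s}}`. -/
def colour (cs : CoxeterSystem M W) (w : W) : Set B :=
  {i | w ∉ parabolic cs {j | j ≠ i}}

/-- The colour-length `‖w‖ = #S_w`. -/
noncomputable def colourLength (cs : CoxeterSystem M W) (w : W) : ℕ :=
  (colour cs w).ncard

/-!
For `k ≠ l`, `w_l⁻¹ w_k = s₀ s_l s_k s₀` where `w_k = s₀ s_k s₀`, and this element has colour
exactly `{s₀, s_k, s_l}`. The inclusion `⊇` is seen in the geometric representation of `W` on
`⨁_B ℝ`: a parabolic subgroup `W_{S∖{t}}` fixes the `t`-th coordinate, whereas `s₀ s_l s_k s₀`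
changes all three coordinates `s₀, s_k, s_l` of `e_{s₀}`, because `m(s₀, s_k), m(s₀, s_l) > 2`
makes the cosines `-cos (π / m)` of those pairs negative. Testing positive definiteness against
the indicator of `{w_1, …, w_n}` then gives `0 ≤ n + n (n - 1) r³`.
-/

open Real

namespace Polynomial.Chebyshev

variable {θ : ℝ}

theorem S_eval_two_mul_cos_eq_zero (hθ : sin θ ≠ 0) {k : ℤ} (h : sin ((k + 1) * θ) = 0) :
    (S ℝ k).eval (2 * cos θ) = 0 := by
  have := S_two_mul_real_cos θ k
  rw [h] at this
  exact (mul_eq_zero.1 this).resolve_right hθ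

theorem S_add_S_sub_one_eval_two_mul_cos_eq_zero (hθ : sin θ ≠ 0) {k : ℤ}
    (h : (2 * k + 1) * θ = 2 * π) :
    (S ℝ k).eval (2 * cos θ) + (S ℝ (k - 1)).eval (2 * cos θ) = 0 := by
  refine (mul_eq_zero.1 (?_ : (_ + _) * sin θ = 0)).resolve_right hθ
  rw [add_mul, S_two_mul_real_cos, S_two_mul_real_cos,
    show ((k : ℝ) + 1) * θ = 2 * π - k * θ by linarith, sin_two_pi_sub]
  push_cast
  ring_nf

end Polynomial.Chebyshev

namespace Module

variable {V : Type*} [AddCommGroup V] [Module ℝ V] {x y : V} {f g : Dual ℝ V}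

theorem reflection_mul_reflection_sq_eq_one (hf : f x = 2) (hg : g y = 2) (hfy : f y = 0)
    (hgx : g x = 0) : (reflection hf * reflection hg) ^ 2 = 1 := by
  ext z
  simp only [pow_two, LinearEquiv.mul_apply, reflection_apply, map_sub, map_smul, hf, hg, hfy, hgx,
    LinearEquiv.coe_one, id]
  module

open Polynomial.Chebyshev in
theorem reflection_mul_reflection_pow_eq_one (hf : f x = 2) (hg : g y = 2) {m : ℕ} (hm : 3 ≤ m)
    (hfg : f y * g x = 4 * cos (π / m) ^ 2) :
    (reflection hf * reflection hg) ^ m = 1 := by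
  have hm' : (3 : ℝ) ≤ m := by exact_mod_cast hm
  set θ := 2 * π / m
  have hmθ : m * θ = 2 * π := mul_div_cancel₀ _ (by positivity)
  have hsin : sin θ ≠ 0 := by
    refine (sin_pos_of_pos_of_lt_pi (by positivity) ?_).ne'
    rw [div_lt_iff₀ (by positivity)]
    nlinarith [pi_pos]
  have ht : 2 * cos θ = f y * g x - 2 := by
    rw [hfg, show θ = 2 * (π / m) by ring, cos_two_mul]; ring
  apply LinearEquiv.toLinearMap_injective
  rw [reflection_mul_reflection_pow hf hg m _ ht]
  -- For `m = 2k` both coefficients of the formula contain `S (k - 1)`, for `m = 2k + 1` both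
  -- contain `S k + S (k - 1)`; these vanish at `2 cos (2π / m)`.
  obtain ⟨k, rfl | rfl⟩ := Nat.even_or_odd' m
  · have hk : (S ℝ (k - 1)).eval (2 * cos θ) = 0 := by
      refine S_eval_two_mul_cos_eq_zero hsin ?_
      push_cast at hmθ ⊢
      rw [show ((k : ℝ) - 1 + 1) * θ = π by linarith, sin_pi]
    push_cast
    rw [show (2 * (k : ℤ) - 2) / 2 = k - 1 by omega, show (2 * (k : ℤ) - 1) / 2 = k - 1 by omega]
    simp [hk]
  · have hk : (S ℝ k).eval (2 * cos θ) + (S ℝ (k - 1)).eval (2 * cos θ) = 0 :=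
      S_add_S_sub_one_eval_two_mul_cos_eq_zero hsin (by exact_mod_cast hmθ)
    push_cast
    rw [show (2 * (k : ℤ) + 1 - 2) / 2 = k - 1 by omega,
      show (2 * (k : ℤ) + 1 - 1) / 2 = k by omega,
      show (2 * (k : ℤ) + 1 - 3) / 2 = k - 1 by omega, show (2 * (k : ℤ) + 1) / 2 = k by omega]
    simp [hk]

end Module

namespace CoxeterMatrix

variable (M)

/-- `M i j = 0` encodes `m = ∞`, for which the cosine is `-1`. -/
noncomputable def cosMatrix : Matrix B B ℝ :=
  Matrix.of fun i j => if M i j = 0 then -1 else -cos (π / M i j)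

theorem cosMatrix_symm (i j : B) : M.cosMatrix i j = M.cosMatrix j i := by
  simp [cosMatrix, M.symmetric]

theorem cosMatrix_self (i : B) : M.cosMatrix i i = 1 := by
  simp [cosMatrix]

variable {M}

theorem cosMatrix_nonpos {i j : B} (h : i ≠ j) : M.cosMatrix i j ≤ 0 := by
  have h1 := M.off_diagonal i j h
  by_cases h0 : M i j = 0
  · simp [cosMatrix, h0]
  have h2 : (2 : ℝ) ≤ M i j := by norm_cast; omega
  simp only [cosMatrix, Matrix.of_apply, if_neg h0, neg_nonpos]
  refine cos_nonneg_of_mem_Icc ⟨by linarith [pi_pos, (by positivity : 0 ≤ π / M i j)], ?_⟩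
  rw [div_le_iff₀ (by linarith)]
  nlinarith [pi_pos]

theorem cosMatrix_neg {i j : B} (h : 2 < M i j) : M.cosMatrix i j < 0 := by
  have h3 : (3 : ℝ) ≤ M i j := by norm_cast
  simp only [cosMatrix, Matrix.of_apply, if_neg (by omega : M i j ≠ 0), neg_neg_iff_pos]
  refine cos_pos_of_mem_Ioo ⟨by linarith [pi_pos, (by positivity : 0 ≤ π / M i j)], ?_⟩
  rw [div_lt_iff₀ (by linarith)]
  nlinarith [pi_pos]

variable (M)

noncomputable def coroot (i : B) : Module.Dual ℝ (B →₀ ℝ) :=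
  2 • Finsupp.linearCombination ℝ (M.cosMatrix i)

@[simp]
theorem coroot_single (i j : B) (a : ℝ) :
    M.coroot i (Finsupp.single j a) = 2 * (a * M.cosMatrix i j) := by
  simp [coroot]

theorem coroot_single_self (i : B) : M.coroot i (Finsupp.single i 1) = 2 := by
  simp [cosMatrix_self]

noncomputable def simpleReflection (i : B) : (B →₀ ℝ) ≃ₗ[ℝ] (B →₀ ℝ) :=
  Module.reflection (M.coroot_single_self i)

theorem simpleReflection_apply (i : B) (v : B →₀ ℝ) :
    M.simpleReflection i v = v - M.coroot i v • Finsupp.single i 1 :=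
  Module.reflection_apply _ _

theorem simpleReflection_apply_of_ne {i j : B} (h : j ≠ i) (v : B →₀ ℝ) :
    M.simpleReflection i v j = v j := by
  simp [simpleReflection_apply, h.symm]

theorem isLiftable_simpleReflection : M.IsLiftable M.simpleReflection := by
  intro i j
  obtain rfl | hij := eq_or_ne i j
  · rw [M.diagonal, pow_one]
    exact LinearEquiv.ext (Module.involutive_reflection (M.coroot_single_self i))
  have hji : M.coroot j (Finsupp.single i 1) = M.coroot i (Finsupp.single j 1) := by
    simp [M.cosMatrix_symm j i]
  have hm := M.off_diagonal i j hij
  obtain h0 | h2 | h3 : M i j = 0 ∨ M i j = 2 ∨ 3 ≤ M i j := by omega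
  · rw [h0, pow_zero]
  · have hij0 : M.coroot i (Finsupp.single j 1) = 0 := by
      simp [cosMatrix, h2]
    rw [h2]
    exact Module.reflection_mul_reflection_sq_eq_one _ _ hij0 (hji.trans hij0)
  · refine Module.reflection_mul_reflection_pow_eq_one _ _ h3 ?_
    have h0 : M i j ≠ 0 := by omega
    rw [hji, coroot_single, cosMatrix, Matrix.of_apply, if_neg h0]
    ring

end CoxeterMatrix

namespace CoxeterSystem

variable (cs : CoxeterSystem M W)

noncomputable def geometricRepresentation : W →* ((B →₀ ℝ) ≃ₗ[ℝ] (B →₀ ℝ)) :=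
  cs.lift ⟨M.simpleReflection, M.isLiftable_simpleReflection⟩

theorem geometricRepresentation_simple (i : B) :
    cs.geometricRepresentation (cs.simple i) = M.simpleReflection i :=
  cs.lift_apply_simple M.isLiftable_simpleReflection i

variable {cs}

theorem geometricRepresentation_apply_of_mem_parabolic {i : B} {u : W}
    (hu : u ∈ parabolic cs {j | j ≠ i}) (v : B →₀ ℝ) :
    cs.geometricRepresentation u v i = v i := by
  induction hu using Subgroup.closure_induction generalizing v with
  | mem _ hx =>
    obtain ⟨j, hj, rfl⟩ := hx
    rw [geometricRepresentation_simple]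
    exact M.simpleReflection_apply_of_ne (Ne.symm hj) v
  | one => simp
  | mul x y _ _ hx hy => rw [map_mul, LinearEquiv.mul_apply, hx, hy]
  | inv x _ hx =>
    conv_rhs => rw [← LinearEquiv.apply_symm_apply (cs.geometricRepresentation x) v]
    rw [hx, map_inv]
    rfl

variable (cs)

theorem geometricRepresentation_simple_mul_simple_mul_simple_mul_simple_apply_single
    (i j k : B) :
    cs.geometricRepresentation (cs.simple i * cs.simple j * cs.simple k * cs.simple i)
        (Finsupp.single i 1) =
      (1 - 4 * (M.cosMatrix i j ^ 2 + M.cosMatrix i k ^ 2 -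
          2 * M.cosMatrix i j * M.cosMatrix i k * M.cosMatrix j k)) • Finsupp.single i 1 +
        (2 * M.cosMatrix i j - 4 * M.cosMatrix i k * M.cosMatrix j k) • Finsupp.single j 1 +
        (2 * M.cosMatrix i k) • Finsupp.single k 1 := by
  simp only [map_mul, LinearEquiv.mul_apply, geometricRepresentation_simple,
    CoxeterMatrix.simpleReflection_apply, map_sub, map_smul, CoxeterMatrix.coroot_single,
    M.cosMatrix_self, M.cosMatrix_symm j i, M.cosMatrix_symm k i]
  module

end CoxeterSystem

theorem colour_one (cs : CoxeterSystem M W) : colour cs 1 = ∅ := by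
  ext i
  simp [colour, one_mem]

theorem colour_subset_of_mem_parabolic (cs : CoxeterSystem M W) {T : Set B} {w : W}
    (hw : w ∈ parabolic cs T) : colour cs w ⊆ T := by
  intro i hi
  by_contra hiT
  refine hi (Subgroup.closure_mono (Set.image_mono fun j hj => ?_) hw)
  rintro rfl
  exact hiT hj

theorem colour_simple_mul_simple_mul_simple_mul_simple (cs : CoxeterSystem M W) {i j k : B}
    (hij : i ≠ j) (hik : i ≠ k) (hjk : j ≠ k)
    (hcij : M.cosMatrix i j < 0) (hcik : M.cosMatrix i k < 0) :
    colour cs (cs.simple i * cs.simple j * cs.simple k * cs.simple i) = {i, j, k} := by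
  refine (colour_subset_of_mem_parabolic cs ?_).antisymm fun l hl hmem => ?_
  · have hsimple (a : B) (ha : a ∈ ({i, j, k} : Set B)) : cs.simple a ∈ parabolic cs {i, j, k} :=
      Subgroup.subset_closure ⟨a, ha, rfl⟩
    exact mul_mem (mul_mem (mul_mem (hsimple i (by simp)) (hsimple j (by simp)))
      (hsimple k (by simp))) (hsimple i (by simp))
  have hl' := CoxeterSystem.geometricRepresentation_apply_of_mem_parabolic hmem (Finsupp.single i 1)
  rw [cs.geometricRepresentation_simple_mul_simple_mul_simple_mul_simple_apply_single] at hl'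
  have hcjk := M.cosMatrix_nonpos hjk
  rcases hl with rfl | rfl | rfl
  · simp [hij, hik] at hl'
    have hab := mul_pos_of_neg_of_neg hcij hcik
    nlinarith [mul_nonpos_of_nonneg_of_nonpos hab.le hcjk, mul_pos_of_neg_of_neg hcik hcik]
  · simp [hij, hjk] at hl'
    nlinarith
  · simp [hik, hjk] at hl'
    nlinarith

theorem colourLength_one (cs : CoxeterSystem M W) : colourLength cs 1 = 0 := by
  rw [colourLength, colour_one, Set.ncard_empty]

theorem colourLength_simple_mul_simple_mul_simple_mul_simple (cs : CoxeterSystem M W) {i j k : B}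
    (hij : i ≠ j) (hik : i ≠ k) (hjk : j ≠ k)
    (hcij : M.cosMatrix i j < 0) (hcik : M.cosMatrix i k < 0) :
    colourLength cs (cs.simple i * cs.simple j * cs.simple k * cs.simple i) = 3 := by
  rw [colourLength, colour_simple_mul_simple_mul_simple_mul_simple cs hij hik hjk hcij hcik]
  exact Set.ncard_eq_three.2 ⟨i, j, k, hij, hik, hjk, rfl⟩

namespace IsPosDef

variable {Γ : Type*} [Group Γ] {φ : Γ → ℂ}

theorem sum_sum_nonneg (hφ : IsPosDef φ) {ι : Type*} [Fintype ι] {g : ι → Γ}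
    (hg : Function.Injective g) : 0 ≤ ∑ a, ∑ b, φ ((g b)⁻¹ * g a) := by
  classical
  simpa [Finset.sum_image hg.injOn] using hφ (Finset.univ.image g) 1

theorem neg_one_div_le_of_offDiag_eq (hφ : IsPosDef φ) {n : ℕ} (hn : 2 ≤ n) (g : Fin n → Γ) {x : ℝ}
    (h1 : φ 1 = 1) (hx : ∀ a b, a ≠ b → φ ((g b)⁻¹ * g a) = x) : -1 / ((n : ℝ) - 1) ≤ x := by
  have hn' : (0 : ℝ) < n - 1 := by
    have : (2 : ℝ) ≤ n := by exact_mod_cast hn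
    linarith
  by_cases hg : Function.Injective g
  swap
  · obtain ⟨a, b, hgab, hab⟩ := Function.not_injective_iff.1 hg
    have hx1 : x = 1 := by
      simpa [hgab, h1, eq_comm] using hx a b hab
    rw [hx1]
    exact (div_nonpos_of_nonpos_of_nonneg (by norm_num) hn'.le).trans zero_le_one
  have hφg (a b : Fin n) : φ ((g b)⁻¹ * g a) = ((x + if a = b then 1 - x else 0 : ℝ) : ℂ) := by
    split_ifs with hab
    · simp [hab, h1]
    · simp [hx a b hab]
  have hsum : 0 ≤ (n : ℝ) * (1 + (n - 1) * x) := by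
    have := hφ.sum_sum_nonneg hg
    simp only [hφg, ← Complex.ofReal_sum, Complex.zero_le_real] at this
    simp only [Finset.sum_add_distrib, Finset.sum_const, Finset.card_univ, Fintype.card_fin,
      nsmul_eq_mul, Finset.sum_ite_eq, Finset.mem_univ, ↓reduceIte] at this
    linarith
  rw [div_le_iff₀ hn']
  nlinarith

end IsPosDef

/-- If there are distinct generators `s 0, s 1, …, s n` with `m(s 0, s k) > 2` for
`1 ≤ k ≤ n`, and `w ↦ r^{‖w‖}` is positive definite on `W`, then `r³ ≥ -1/(n-1)`. -/
theorem stmt_8 (cs : CoxeterSystem M W) (r : ℝ) (n : ℕ) (hn : 2 ≤ n)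
    (s : Fin (n + 1) → B) (hinj : Function.Injective s)
    (hM : ∀ k : Fin (n + 1), k ≠ 0 → 2 < M (s 0) (s k))
    (hpd : IsPosDef (fun w : W => ((r ^ colourLength cs w : ℝ) : ℂ))) :
    -1 / ((n : ℝ) - 1) ≤ r ^ 3 := by
  let w (a : Fin n) : W := cs.simple (s 0) * cs.simple (s a.succ) * cs.simple (s 0)
  refine hpd.neg_one_div_le_of_offDiag_eq hn w (by simp [colourLength_one]) fun a b hab => ?_
  have hne (a : Fin n) : s 0 ≠ s a.succ := hinj.ne a.succ_ne_zero.symm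
  have hw : (w b)⁻¹ * w a =
      cs.simple (s 0) * cs.simple (s b.succ) * cs.simple (s a.succ) * cs.simple (s 0) := by
    simp [w, mul_assoc]
  rw [hw, colourLength_simple_mul_simple_mul_simple_mul_simple cs (hne b) (hne a)
    (hinj.ne (Fin.succ_injective n |>.ne hab.symm))
    (CoxeterMatrix.cosMatrix_neg (hM _ b.succ_ne_zero))
    (CoxeterMatrix.cosMatrix_neg (hM _ a.succ_ne_zero))]
end

section
/- Let W = D_∞ = ⟨s,t | s² = t² = 1⟩ be the infinite dihedral group and define φ(e)=1, φ(s)=p, φ(t)=q, φ(w)=r for all other w. Then φ is positive definite on W if and only if max{0, p+q-1} ≤ r ≤ min{1 - |p-q|, (1+p+q)/3}. -/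
/-!
Write `φ = r + ψ`, where `ψ = (1 - r) δ₁ + (p - r) δ_s + (q - r) δ_t` is supported on `{1, s, t}`;
the region of the statement is `0 ≤ r ∧ |p - r| + |q - r| ≤ 1 - r`.

Sufficiency: `ψ` is a nonnegative combination of `δ₁ ± δ_s` and `δ₁ ± δ_t`, which are indicators of
the subgroups `⟨s⟩`, `⟨t⟩`, possibly twisted by a sign character, hence positive definite.

Necessity: on an infinite group, subtracting from a positive definite function its constant value
off a finite set keeps it positive definite. Twisting `ψ` by the four sign characters `χ` of `D_∞`
and testing against the constant function on a long segment of the Cayley graph (a line) gives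
`(1 - r) + χ(s) (p - r) + χ(t) (q - r) ≥ 0`; the same test applied to `φ` gives `r ≥ 0`.
-/

open scoped ComplexOrder

section PositiveDefinite

variable {Γ : Type*} [Group Γ]

def quadForm (φ : Γ → ℂ) (s : Finset Γ) (α : Γ → ℂ) : ℂ :=
  ∑ x ∈ s, ∑ y ∈ s, φ (y⁻¹ * x) * α x * starRingEnd ℂ (α y)

theorem isPosDef_iff_quadForm_nonneg {φ : Γ → ℂ} :
    IsPosDef φ ↔ ∀ s α, 0 ≤ quadForm φ s α :=
  Iff.rfl

theorem quadForm_add (φ ψ : Γ → ℂ) (s : Finset Γ) (α : Γ → ℂ) :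
    quadForm (fun g => φ g + ψ g) s α = quadForm φ s α + quadForm ψ s α := by
  simp only [quadForm, add_mul, Finset.sum_add_distrib]

theorem quadForm_const_mul (c : ℂ) (φ : Γ → ℂ) (s : Finset Γ) (α : Γ → ℂ) :
    quadForm (fun g => c * φ g) s α = c * quadForm φ s α := by
  simp only [quadForm, Finset.mul_sum, mul_assoc]

theorem quadForm_const_one (c : ℂ) (s : Finset Γ) :
    quadForm (fun _ => c) s (fun _ => 1) = s.card ^ 2 * c := by
  simp [quadForm, sq, mul_assoc]

theorem sum_ite_inv_mul_eq [DecidableEq Γ] (s : Finset Γ) (y g : Γ) (c : ℂ) :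
    ∑ x ∈ s, (if y⁻¹ * x = g then c else 0) = if y * g ∈ s then c else 0 := by
  simp_rw [inv_mul_eq_iff_eq_mul]
  exact Finset.sum_ite_eq' s (y * g) _

theorem quadForm_units_mul (χ : Γ →* ℤˣ) (φ : Γ → ℂ) (s : Finset Γ) (α : Γ → ℂ) :
    quadForm (fun g => ((χ g : ℤ) : ℂ) * φ g) s α
      = quadForm φ s (fun g => ((χ g : ℤ) : ℂ) * α g) := by
  refine Finset.sum_congr rfl fun x _ => Finset.sum_congr rfl fun y _ => ?_
  simp only [map_mul, map_inv, Int.units_inv_eq_self, Units.val_mul, Int.cast_mul, map_intCast]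
  ring

theorem IsPosDef.add_s11 {φ ψ : Γ → ℂ} (hφ : IsPosDef φ) (hψ : IsPosDef ψ) :
    IsPosDef (fun g => φ g + ψ g) := isPosDef_iff_quadForm_nonneg.2 fun s α => by
  rw [quadForm_add]
  exact add_nonneg (hφ s α) (hψ s α)

theorem IsPosDef.const_mul_s11 {φ : Γ → ℂ} (hφ : IsPosDef φ) {c : ℝ} (hc : 0 ≤ c) :
    IsPosDef (fun g => (c : ℂ) * φ g) := isPosDef_iff_quadForm_nonneg.2 fun s α => by
  rw [quadForm_const_mul]
  exact mul_nonneg (Complex.zero_le_real.mpr hc) (hφ s α)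

theorem IsPosDef.units_mul {φ : Γ → ℂ} (hφ : IsPosDef φ) (χ : Γ →* ℤˣ) :
    IsPosDef (fun g => ((χ g : ℤ) : ℂ) * φ g) := isPosDef_iff_quadForm_nonneg.2 fun s α => by
  rw [quadForm_units_mul]
  exact hφ s _

theorem isPosDef_indicator_subgroup (H : Subgroup Γ) :
    IsPosDef ((H : Set Γ).indicator fun _ => 1) := by
  classical
  intro s α
  let F : Γ ⧸ H → ℂ := fun c => ∑ x ∈ s.filter (fun x : Γ => (x : Γ ⧸ H) = c), α x
  have hfiber : ∀ x ∈ s, ∑ y ∈ s, (H : Set Γ).indicator (fun _ => (1 : ℂ)) (y⁻¹ * x)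
      * α x * starRingEnd ℂ (α y) = α x * starRingEnd ℂ (F (x : Γ ⧸ H)) := by
    intro x _
    simp only [F, map_sum, Finset.mul_sum, Finset.sum_filter]
    refine Finset.sum_congr rfl fun y _ => ?_
    simp only [Set.indicator_apply, SetLike.mem_coe, ← QuotientGroup.eq,
      eq_comm (a := (y : Γ ⧸ H))]
    split_ifs <;> simp
  rw [Finset.sum_congr rfl hfiber, ← Finset.sum_fiberwise_of_maps_to
    (fun x hx => Finset.mem_image_of_mem (fun x : Γ => (x : Γ ⧸ H)) hx)]
  refine Finset.sum_nonneg fun c _ => ?_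
  rw [Finset.sum_congr rfl fun x hx => by rw [(Finset.mem_filter.mp hx).2], ← Finset.sum_mul]
  exact mul_star_self_nonneg (F c)

theorem isPosDef_const {c : ℝ} (hc : 0 ≤ c) : IsPosDef (fun _ : Γ => (c : ℂ)) := by
  convert (isPosDef_indicator_subgroup (⊤ : Subgroup Γ)).const_mul_s11 hc using 2
  simp

theorem mem_zpowers_iff_of_orderOf_eq_two {g w : Γ} (hg : orderOf g = 2) :
    w ∈ Subgroup.zpowers g ↔ w = 1 ∨ w = g := by
  refine ⟨fun hw => ?_, ?_⟩
  · obtain ⟨k, rfl⟩ := Subgroup.mem_zpowers_iff.mp hw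
    rw [← zpow_mod_orderOf, hg]
    rcases Int.emod_two_eq_zero_or_one k with h | h <;> simp [h]
  · rintro (rfl | rfl)
    exacts [one_mem _, Subgroup.mem_zpowers _]

theorem isPosDef_of_orderOf_eq_two [DecidableEq Γ] {g : Γ} (hg : orderOf g = 2) (χ : Γ →* ℤˣ)
    (hχ : χ g = -1) {a b : ℝ} (hab : |b| ≤ a) :
    IsPosDef (fun w => (if w = 1 then (a : ℂ) else 0) + (if w = g then (b : ℂ) else 0)) := by
  have hg1 : g ≠ 1 := by rintro rfl; simp at hg
  have hind := isPosDef_indicator_subgroup (Subgroup.zpowers g)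
  convert (hind.const_mul_s11 (c := (a + b) / 2) (by linarith [neg_abs_le b])).add_s11
    ((hind.units_mul χ).const_mul_s11 (c := (a - b) / 2) (by linarith [le_abs_self b])) using 2 with w
  classical
  simp only [Set.indicator_apply, SetLike.mem_coe, mem_zpowers_iff_of_orderOf_eq_two hg]
  by_cases h1 : w = 1
  · subst h1; simp [hg1.symm]; ring
  by_cases h2 : w = g
  · subst h2; simp [hg1, hχ]; ring
  simp [h1, h2]

open Pointwise in
/-- The test function `α - α(g⁻¹ ·)`, with `g` so far away that `φ ≡ c` between `s` and `g s`,
has quadratic form `2 (Q_φ(α) - c |∑ α|²)`. -/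
theorem IsPosDef.sub_const [Infinite Γ] {φ : Γ → ℂ} (hφ : IsPosDef φ) {c : ℂ}
    (hfin : {g | φ g ≠ c}.Finite) : IsPosDef (fun g => φ g - c) := by
  classical
  refine isPosDef_iff_quadForm_nonneg.2 fun s α => ?_
  set F := insert 1 hfin.toFinset
  have hc : ∀ z ∉ F, φ z = c := fun z hz => by
    simp only [F, Finset.mem_insert, Set.Finite.mem_toFinset, Set.mem_ofPred_eq, not_or,
      not_not] at hz
    exact hz.2
  have hfar : ∀ h ∉ s * F * s⁻¹, ∀ x ∈ s, ∀ y ∈ s, y⁻¹ * (h * x) ∉ F := by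
    intro h hh x hx y hy hmem
    refine hh ?_
    rw [show h = y * (y⁻¹ * (h * x)) * x⁻¹ by group]
    exact Finset.mul_mem_mul (Finset.mul_mem_mul hy hmem) (Finset.inv_mem_inv hx)
  obtain ⟨g, hg⟩ := Infinite.exists_notMem_finset (s * F * s⁻¹ ∪ (s * F * s⁻¹)⁻¹)
  rw [Finset.mem_union, not_or, Finset.mem_inv'] at hg
  have hleft : ∀ x ∈ s, ∀ y ∈ s, φ (y⁻¹ * (g * x)) = c := fun x hx y hy =>
    hc _ (hfar g hg.1 x hx y hy)
  have hright : ∀ x ∈ s, ∀ y ∈ s, φ ((g * y)⁻¹ * x) = c := fun x hx y hy => by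
    rw [mul_inv_rev, mul_assoc]
    exact hc _ (hfar g⁻¹ hg.2 x hx y hy)
  have hout : ∀ x ∈ s, g * x ∉ s := fun x hx hgx =>
    hfar g hg.1 x hx _ hgx (by rw [inv_mul_cancel]; exact Finset.mem_insert_self 1 _)
  have hdisj : Disjoint s (s.image (g * ·)) := by
    simp only [Finset.disjoint_right, Finset.mem_image]
    rintro _ ⟨x, hx, rfl⟩
    exact hout x hx
  let β : Γ → ℂ := fun z => if z ∈ s then α z else -α (g⁻¹ * z)
  have hβ : ∀ x ∈ s, β x = α x := fun x hx => if_pos hx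
  have hβg : ∀ x ∈ s, β (g * x) = -α x := fun x hx => by simp [β, hout x hx]
  have key : quadForm φ (s ∪ s.image (g * ·)) β = 2 * quadForm (fun g => φ g - c) s α := by
    simp only [quadForm, Finset.sum_union hdisj,
      Finset.sum_image fun _ _ _ _ h => mul_left_cancel h]
    rw [Finset.mul_sum, ← Finset.sum_add_distrib]
    refine Finset.sum_congr rfl fun x hx => ?_
    rw [Finset.mul_sum, ← Finset.sum_add_distrib, ← Finset.sum_add_distrib,
      ← Finset.sum_add_distrib]
    refine Finset.sum_congr rfl fun y hy => ?_
    rw [hβ x hx, hβ y hy, hβg x hx, hβg y hy, hleft x hx y hy, hright x hx y hy,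
      show (g * y)⁻¹ * (g * x) = y⁻¹ * x by group, map_neg]
    ring
  have hhalf : quadForm (fun g => φ g - c) s α
      = ((1 / 2 : ℝ) : ℂ) * quadForm φ (s ∪ s.image (g * ·)) β := by
    rw [key]; push_cast; ring
  rw [hhalf]
  exact mul_nonneg (Complex.zero_le_real.2 (by norm_num)) (hφ _ β)

end PositiveDefinite

theorem nonneg_of_forall_nat_mul_add_nonneg {a b : ℝ} (h : ∀ n : ℕ, 0 ≤ a * n + b) : 0 ≤ a := by
  by_contra! ha
  obtain ⟨n, hn⟩ := exists_nat_gt (b / -a)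
  rw [div_lt_iff₀ (neg_pos.mpr ha)] at hn
  linarith [h n]

theorem nonneg_of_forall_nat_quadratic_nonneg {a b c : ℝ}
    (h : ∀ n : ℕ, 0 ≤ a * n ^ 2 + b * n + c) : 0 ≤ a := by
  refine nonneg_of_forall_nat_mul_add_nonneg (b := |b| + |c|) fun n => ?_
  rcases n.eq_zero_or_pos with rfl | hn
  · simp only [Nat.cast_zero, mul_zero, zero_add]
    positivity
  have hn : (1 : ℝ) ≤ n := by exact_mod_cast hn
  by_contra! hneg
  nlinarith [h n, le_abs_self b, le_abs_self c, abs_nonneg c]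

theorem natCast_card_Icc {a b : ℤ} (h : a ≤ b + 1) :
    ((Finset.Icc a b).card : ℂ) = b + 1 - a := by
  exact_mod_cast Int.card_Icc_of_le a b h

theorem sum_Icc_ite_le (c : ℂ) {lo hi lo' : ℤ} (h₁ : lo ≤ lo') (h₂ : lo' ≤ hi + 1) :
    ∑ i ∈ Finset.Icc lo hi, (if lo' ≤ i then c else 0) = (hi + 1 - lo') * c := by
  rw [Finset.sum_ite, Finset.sum_const_zero, add_zero, Finset.sum_const, nsmul_eq_mul,
    ← natCast_card_Icc h₂]
  congr 3
  ext i
  simp only [Finset.mem_filter, Finset.mem_Icc]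
  omega

namespace InfiniteDihedral

open DihedralGroup

/-- With `s = sr 0` and `t = sr 1` we have `r i = (s t) ^ i` and `sr i = s * r i`, so the character
with `χ s = a` and `χ t = b` is `(a b) ^ i` on `r i` and `a (a b) ^ i` on `sr i`. -/
def signChar (a b : ℤˣ) : DihedralGroup 0 →* ℤˣ where
  toFun
    | r i => (a * b) ^ (ZMod.cast i : ℤ)
    | sr i => a * (a * b) ^ (ZMod.cast i : ℤ)
  map_one' := by simp [one_def, -r_zero]
  map_mul' := by
    rintro (i | i) (j | j) <;>
      simp only [r_mul_r, r_mul_sr, sr_mul_r, sr_mul_sr, ZMod.cast_add', ZMod.cast_sub', zpow_add,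
        zpow_sub, Int.units_inv_eq_self]
    · ac_rfl
    · ac_rfl
    · rw [mul_mul_mul_comm, Int.units_mul_self, one_mul, mul_comm]

@[simp] theorem signChar_sr_zero (a b : ℤˣ) : signChar a b (sr 0) = a := by
  simp [signChar]

@[simp] theorem signChar_sr_one (a b : ℤˣ) : signChar a b (sr 1) = b := by
  simp [signChar, ← mul_assoc, Int.units_mul_self]

theorem sr_zero_ne_one : (sr 0 : DihedralGroup 0) ≠ 1 := by decide

theorem sr_one_ne_one : (sr 1 : DihedralGroup 0) ≠ 1 := by decide

def localKernel (a b c : ℝ) (w : DihedralGroup 0) : ℂ :=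
  (if w = 1 then (a : ℂ) else 0) + (if w = sr 0 then (b : ℂ) else 0)
    + (if w = sr 1 then (c : ℂ) else 0)

@[simp] theorem localKernel_one (a b c : ℝ) : localKernel a b c 1 = a := by
  simp [localKernel, sr_zero_ne_one.symm, sr_one_ne_one.symm]

@[simp] theorem localKernel_sr_zero (a b c : ℝ) : localKernel a b c (sr 0) = b := by
  simp [localKernel, sr_zero_ne_one]

@[simp] theorem localKernel_sr_one (a b c : ℝ) : localKernel a b c (sr 1) = c := by
  simp [localKernel, sr_one_ne_one]

theorem localKernel_of_ne {a b c : ℝ} {w : DihedralGroup 0} (h1 : w ≠ 1) (hs : w ≠ sr 0)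
    (ht : w ≠ sr 1) : localKernel a b c w = 0 := by
  simp [localKernel, h1, hs, ht]

theorem finite_support_localKernel (a b c : ℝ) : (Function.support (localKernel a b c)).Finite := by
  refine (Set.toFinite {1, sr 0, sr 1}).subset fun w hw => ?_
  by_contra hw'
  simp only [Set.mem_insert_iff, Set.mem_singleton_iff, not_or] at hw'
  exact hw (localKernel_of_ne hw'.1 hw'.2.1 hw'.2.2)

theorem isPosDef_localKernel {a b c : ℝ} (h : |b| + |c| ≤ a) : IsPosDef (localKernel a b c) := by
  have hs := isPosDef_of_orderOf_eq_two (orderOf_sr 0) (signChar (-1) (-1))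
    (signChar_sr_zero _ _) (a := a - |c|) (b := b) (by linarith)
  have ht := isPosDef_of_orderOf_eq_two (orderOf_sr 1) (signChar (-1) (-1))
    (signChar_sr_one _ _) (a := |c|) (b := c) le_rfl
  convert hs.add_s11 ht using 2 with w
  simp only [localKernel]
  split_ifs <;> push_cast <;> ring

theorem isPosDef_localKernel_units_mul {a b c : ℝ} (h : IsPosDef (localKernel a b c))
    (ε δ : ℤˣ) : IsPosDef (localKernel a (ε * b) (δ * c)) := by
  convert h.units_mul (signChar ε δ) using 1
  funext w
  by_cases h1 : w = 1; · simp [h1]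
  by_cases hs : w = sr 0; · simp [hs]
  by_cases ht : w = sr 1; · simp [ht]
  simp [localKernel_of_ne h1 hs ht]

noncomputable def window (n : ℕ) : Finset (DihedralGroup 0) :=
  (Finset.Icc 0 (n : ℤ)).image (fun i => r (Int.cast i)) ∪
    (Finset.Icc (-(n : ℤ)) 0).image (fun i => sr (Int.cast i))

theorem r_mem_window {n : ℕ} {i : ℤ} : r (Int.cast i) ∈ window n ↔ 0 ≤ i ∧ i ≤ n := by
  simp [window]

theorem sr_mem_window {n : ℕ} {i : ℤ} : sr (Int.cast i) ∈ window n ↔ -n ≤ i ∧ i ≤ 0 := by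
  simp [window]

theorem sum_window {M : Type*} [AddCommMonoid M] (n : ℕ) (f : DihedralGroup 0 → M) :
    ∑ w ∈ window n, f w = ∑ i ∈ Finset.Icc 0 (n : ℤ), f (r (n := 0) (Int.cast i))
      + ∑ i ∈ Finset.Icc (-(n : ℤ)) 0, f (sr (n := 0) (Int.cast i)) := by
  have hdisj : Disjoint ((Finset.Icc 0 (n : ℤ)).image fun i => (r (Int.cast i) : DihedralGroup 0))
      ((Finset.Icc (-(n : ℤ)) 0).image fun i => sr (Int.cast i)) := by
    simp only [Finset.disjoint_left, Finset.mem_image]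
    rintro _ ⟨i, _, rfl⟩ ⟨j, _, h⟩
    exact absurd h (by simp)
  rw [window, Finset.sum_union hdisj, Finset.sum_image (by simp), Finset.sum_image (by simp)]

theorem card_window (n : ℕ) : (window n).card = 2 * n + 2 := by
  rw [Finset.card_eq_sum_ones, sum_window]
  simp only [Finset.sum_const, Int.card_Icc, smul_eq_mul, mul_one]
  omega

theorem sum_localKernel (a b c : ℝ) (s : Finset (DihedralGroup 0)) (y : DihedralGroup 0) :
    ∑ x ∈ s, localKernel a b c (y⁻¹ * x)
      = (if y ∈ s then (a : ℂ) else 0) + (if y * sr 0 ∈ s then (b : ℂ) else 0)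
        + (if y * sr 1 ∈ s then (c : ℂ) else 0) := by
  simp only [localKernel, Finset.sum_add_distrib, sum_ite_inv_mul_eq, mul_one]

/-- `window n` is a path of `2n + 2` vertices in the Cayley graph of `D_∞` (a line whose edges
alternate between `s` and `t`): right multiplication by `s` preserves it, by `t` it leaves it at
both ends. -/
theorem quadForm_localKernel_window (a b c : ℝ) (n : ℕ) :
    quadForm (localKernel a b c) (window n) (fun _ => 1)
      = (((2 * n + 2) * (a + b) + 2 * n * c : ℝ) : ℂ) := by
  have hr : ∀ i ∈ Finset.Icc 0 (n : ℤ),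
      ∑ x ∈ window n, localKernel a b c ((r (Int.cast i))⁻¹ * x)
        = a + b + if 1 ≤ i then (c : ℂ) else 0 := by
    intro i hi
    rw [Finset.mem_Icc] at hi
    have hs : (r (Int.cast i) : DihedralGroup 0) * sr 0 = sr (Int.cast (-i)) := by
      simp [r_mul_sr]
    have ht : (r (Int.cast i) : DihedralGroup 0) * sr 1 = sr (Int.cast (1 - i)) := by
      simp [r_mul_sr]
    simp only [sum_localKernel, hs, ht, r_mem_window, sr_mem_window]
    rw [if_pos hi, if_pos (by omega)]
    exact congrArg _ (if_congr (by omega) rfl rfl)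
  have hsr : ∀ i ∈ Finset.Icc (-(n : ℤ)) 0,
      ∑ x ∈ window n, localKernel a b c ((sr (Int.cast i))⁻¹ * x)
        = a + b + if 1 - n ≤ i then (c : ℂ) else 0 := by
    intro i hi
    rw [Finset.mem_Icc] at hi
    have hs : (sr (Int.cast i) : DihedralGroup 0) * sr 0 = r (Int.cast (-i)) := by
      simp [sr_mul_sr]
    have ht : (sr (Int.cast i) : DihedralGroup 0) * sr 1 = r (Int.cast (1 - i)) := by
      simp [sr_mul_sr]
    simp only [sum_localKernel, hs, ht, r_mem_window, sr_mem_window]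
    rw [if_pos hi, if_pos (by omega)]
    exact congrArg _ (if_congr (by omega) rfl rfl)
  simp only [quadForm, mul_one, map_one]
  rw [Finset.sum_comm, sum_window, Finset.sum_congr rfl hr, Finset.sum_congr rfl hsr]
  simp only [Finset.sum_add_distrib, Finset.sum_const, nsmul_eq_mul]
  rw [natCast_card_Icc (by omega), natCast_card_Icc (by omega),
    sum_Icc_ite_le _ (by omega) (by omega), sum_Icc_ite_le _ (by omega) (by omega)]
  push_cast
  ring

theorem add_add_nonneg_of_isPosDef_localKernel {a b c : ℝ} (h : IsPosDef (localKernel a b c)) :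
    0 ≤ a + b + c := by
  have := nonneg_of_forall_nat_mul_add_nonneg (a := 2 * (a + b + c)) (b := 2 * (a + b)) fun n => by
    have hn := isPosDef_iff_quadForm_nonneg.1 h (window n) fun _ => 1
    rw [quadForm_localKernel_window, Complex.zero_le_real] at hn
    linarith
  linarith

theorem isPosDef_localKernel_iff {a b c : ℝ} : IsPosDef (localKernel a b c) ↔ |b| + |c| ≤ a := by
  refine ⟨fun h => ?_, isPosDef_localKernel⟩
  have hpp := add_add_nonneg_of_isPosDef_localKernel (isPosDef_localKernel_units_mul h 1 1)
  have hpm := add_add_nonneg_of_isPosDef_localKernel (isPosDef_localKernel_units_mul h 1 (-1))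
  have hmp := add_add_nonneg_of_isPosDef_localKernel (isPosDef_localKernel_units_mul h (-1) 1)
  have hmm := add_add_nonneg_of_isPosDef_localKernel (isPosDef_localKernel_units_mul h (-1) (-1))
  push_cast at hpp hpm hmp hmm
  rcases abs_cases b with hb | hb <;> rcases abs_cases c with hc | hc <;> linarith

theorem nonneg_of_isPosDef_const_add_localKernel {r a b c : ℝ}
    (h : IsPosDef (fun w => (r : ℂ) + localKernel a b c w)) : 0 ≤ r := by
  have := nonneg_of_forall_nat_quadratic_nonneg (a := 4 * r) (b := 8 * r + 2 * (a + b) + 2 * c)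
    (c := 4 * r + 2 * (a + b)) fun n => by
      have hn := isPosDef_iff_quadForm_nonneg.1 h (window n) fun _ => 1
      rw [quadForm_add, quadForm_const_one, card_window, quadForm_localKernel_window] at hn
      have hn : 0 ≤ (((2 * n + 2) ^ 2 * r + ((2 * n + 2) * (a + b) + 2 * n * c) : ℝ) : ℂ) := by
        exact_mod_cast hn
      rw [Complex.zero_le_real] at hn
      linarith
  linarith

theorem isPosDef_const_add_localKernel_iff {r a b c : ℝ} :
    IsPosDef (fun w => (r : ℂ) + localKernel a b c w) ↔ 0 ≤ r ∧ |b| + |c| ≤ a := by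
  refine ⟨fun h => ⟨nonneg_of_isPosDef_const_add_localKernel h, ?_⟩,
    fun ⟨hr, h⟩ => (isPosDef_const hr).add_s11 (isPosDef_localKernel h)⟩
  have hψ := h.sub_const (c := r)
    ((finite_support_localKernel a b c).subset fun w hw h0 => hw (by simp [h0]))
  rwa [funext fun w => add_sub_cancel_left (r : ℂ) (localKernel a b c w),
    isPosDef_localKernel_iff] at hψ

theorem ite_eq_const_add_localKernel (p q r : ℝ) :
    (fun w : DihedralGroup 0 =>
      if w = 1 then (1 : ℂ) else if w = sr 0 then (p : ℂ) else if w = sr 1 then (q : ℂ)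
      else (r : ℂ))
      = fun w => (r : ℂ) + localKernel (1 - r) (p - r) (q - r) w := by
  funext w
  by_cases h1 : w = 1; · simp [h1]
  by_cases hs : w = sr 0; · simp [hs, sr_zero_ne_one]
  by_cases ht : w = sr 1; · simp [ht, sr_one_ne_one]
  simp [h1, hs, ht, localKernel_of_ne h1 hs ht]

end InfiniteDihedral

theorem nonneg_and_abs_add_abs_le_iff (p q r : ℝ) :
    (0 ≤ r ∧ |p - r| + |q - r| ≤ 1 - r) ↔
      (max 0 (p + q - 1) ≤ r ∧ r ≤ min (1 - |p - q|) ((1 + p + q) / 3)) := by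
  rw [max_le_iff, le_min_iff]
  constructor
  · rintro ⟨hr, h⟩
    have := abs_sub_le p r q
    rw [abs_sub_comm r q] at this
    refine ⟨⟨hr, ?_⟩, by linarith, ?_⟩ <;>
      linarith [le_abs_self (p - r), le_abs_self (q - r), neg_abs_le (p - r), neg_abs_le (q - r)]
  · rintro ⟨⟨hr, h₁⟩, h₂, h₃⟩
    refine ⟨hr, ?_⟩
    have := abs_le.mp (show |p - q| ≤ 1 - r by linarith)
    rcases abs_cases (p - r) with h | h <;> rcases abs_cases (q - r) with h' | h' <;> linarith

/-- On the infinite dihedral group `D_∞ = DihedralGroup 0` with Coxeter generators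
`s = sr 0`, `t = sr 1`, the function `φ(e) = 1`, `φ(s) = p`, `φ(t) = q`, `φ(w) = r`
otherwise, is positive definite iff
`max{0, p+q-1} ≤ r ≤ min{1 - |p-q|, (1+p+q)/3}`. -/
theorem stmt_11 (p q r : ℝ) :
    IsPosDef (fun w : DihedralGroup 0 =>
      if w = 1 then (1 : ℂ)
      else if w = DihedralGroup.sr 0 then (p : ℂ)
      else if w = DihedralGroup.sr 1 then (q : ℂ)
      else (r : ℂ)) ↔
    (max 0 (p + q - 1) ≤ r ∧ r ≤ min (1 - |p - q|) ((1 + p + q) / 3)) := by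
  rw [InfiniteDihedral.ite_eq_const_add_localKernel,
    InfiniteDihedral.isPosDef_const_add_localKernel_iff, nonneg_and_abs_add_abs_le_iff]
end

section
/- The map σ ↦ σ̄ = {{i, 2n+1−σ(i)} : 1 ≤ i ≤ n} from the symmetric group 𝔖_n to pairpartitions of [2n] satisfies: |σ̄| (the number of crossings of the pairpartition σ̄) equals the Coxeter length of σ with respect to the adjacent transpositions, i.e., the number of inversions of σ. -/
/-- A pairpartition (perfect matching) of `{0, …, m-1}`, encoded as a fixed-point-free
involution. -/
structure PairPartition (m : ℕ) where
  f : Fin m → Fin m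
  invol : ∀ x, f (f x) = x
  nofix : ∀ x, f x ≠ x

/-- The number of crossings `|π|`: quadruples `a < b < c < d` with `{a,c}, {b,d} ∈ π`. -/
def PairPartition.crossings {m : ℕ} (π : PairPartition m) : ℕ :=
  (Finset.univ.filter fun p : Fin m × Fin m =>
    p.1 < p.2 ∧ p.2 < π.f p.1 ∧ π.f p.1 < π.f p.2).card

/-- The underlying function of the pairpartition `σ̄`, pairing `i` with `2n−1−σ(i)`
(`0`-indexed version of `{{i, 2n+1−σ(i)}}`). -/
def barFun (n : ℕ) (σ : Equiv.Perm (Fin n)) (x : Fin (2 * n)) : Fin (2 * n) :=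
  if h : (x : ℕ) < n then
    ⟨2 * n - 1 - (σ ⟨x, h⟩ : ℕ), by have := (σ ⟨x, h⟩).isLt; omega⟩
  else
    ⟨(σ.symm ⟨2 * n - 1 - (x : ℕ), by have := x.isLt; omega⟩ : ℕ), by
      have := (σ.symm ⟨2 * n - 1 - (x : ℕ), by have := x.isLt; omega⟩).isLt; omega⟩

/-- The pairpartition `σ̄ = {{i, 2n+1−σ(i)} : 1 ≤ i ≤ n}` associated to `σ ∈ 𝔖_n`. -/
def bar (n : ℕ) (σ : Equiv.Perm (Fin n)) : PairPartition (2 * n) where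
  f := barFun n σ
  invol := by
    intro x
    by_cases h : (x : ℕ) < n
    · have h1 : (σ ⟨x, h⟩ : ℕ) < n := (σ ⟨x, h⟩).isLt
      apply Fin.ext
      simp only [barFun, h, dif_pos, Fin.val_mk]
      have h2 : ¬ (2 * n - 1 - (σ ⟨x, h⟩ : ℕ) < n) := by omega
      rw [dif_neg h2]
      have e : (⟨2 * n - 1 - (2 * n - 1 - (σ ⟨x, h⟩ : ℕ)), by omega⟩ : Fin n)
          = σ ⟨x, h⟩ := by
        apply Fin.ext
        simp only [Fin.val_mk]
        omega
      simp only [Fin.val_mk]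
      rw [e, Equiv.symm_apply_apply]
    · have hx := x.isLt
      have h1 : ((σ.symm ⟨2 * n - 1 - (x : ℕ), by omega⟩ : Fin n) : ℕ) < n :=
        (σ.symm _).isLt
      apply Fin.ext
      simp only [barFun, dif_neg h]
      split
      next h2 =>
        simp only [Fin.eta, Equiv.apply_symm_apply, Fin.val_mk]
        omega
      next h2 => exact absurd h1 h2
  nofix := by
    intro x hx
    by_cases h : (x : ℕ) < n
    · have h1 : (σ ⟨x, h⟩ : ℕ) < n := (σ ⟨x, h⟩).isLt
      have := congrArg Fin.val hx
      simp only [barFun, dif_pos h, Fin.val_mk] at this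
      omega
    · have hx2 := x.isLt
      have h1 : ((σ.symm ⟨2 * n - 1 - (x : ℕ), by omega⟩ : Fin n) : ℕ) < n :=
        (σ.symm _).isLt
      have := congrArg Fin.val hx
      simp only [barFun, dif_neg h, Fin.val_mk] at this
      omega

/-- The number of inversions of a permutation. -/
def inversions {n : ℕ} (σ : Equiv.Perm (Fin n)) : ℕ :=
  (Finset.univ.filter fun p : Fin n × Fin n => p.1 < p.2 ∧ σ p.2 < σ p.1).card

/-!
Positions below `n` are paired with positions at least `n`, and vice versa. So in a crossing
`a < b < π a < π b` of `σ̄` the point `b` lies below `n` (otherwise `π b < n ≤ b < π a`), hence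
so does `a`. On `{0, …, n-1}` we have `π i = 2n-1-σ i`, so `b < π a` is automatic and
`π a < π b` says `σ b < σ a`: crossings are exactly inversions.
-/

namespace bar

variable {n : ℕ} (σ : Equiv.Perm (Fin n)) (h : n ≤ 2 * n)

lemma f_castLE_val (i : Fin n) : ((bar n σ).f (Fin.castLE h i) : ℕ) = 2 * n - 1 - σ i := by
  simp [bar, barFun]

lemma castLE_lt_f_castLE (i j : Fin n) : Fin.castLE h j < (bar n σ).f (Fin.castLE h i) := by
  rw [Fin.lt_def, f_castLE_val, Fin.val_castLE]
  have := (σ i).isLt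
  omega

lemma f_castLE_lt_f_castLE_iff (i j : Fin n) :
    (bar n σ).f (Fin.castLE h i) < (bar n σ).f (Fin.castLE h j) ↔ σ j < σ i := by
  rw [Fin.lt_def, Fin.lt_def, f_castLE_val, f_castLE_val]
  have := (σ i).isLt
  have := (σ j).isLt
  omega

lemma f_val_lt_of_le {x : Fin (2 * n)} (hx : n ≤ x) : ((bar n σ).f x : ℕ) < n := by
  simp only [bar, barFun, dif_neg hx.not_gt]
  exact (σ.symm _).isLt

lemma val_lt_of_lt_f_of_f_lt {a b : Fin (2 * n)} (hb : b < (bar n σ).f a)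
    (hab : (bar n σ).f a < (bar n σ).f b) : (b : ℕ) < n := by
  by_contra! hnb
  have := f_val_lt_of_le σ hnb
  rw [Fin.lt_def] at hb hab
  omega

end bar

/-- The number of crossings of the pairpartition `σ̄` equals the Coxeter length
(= number of inversions) of `σ`. -/
theorem stmt_16 (n : ℕ) (σ : Equiv.Perm (Fin n)) :
    (bar n σ).crossings = inversions σ := by
  have h : n ≤ 2 * n := by omega
  symm
  apply Finset.card_bij fun q _ => (Fin.castLE h q.1, Fin.castLE h q.2)
  · rintro ⟨i, j⟩ hij
    simpa [bar.castLE_lt_f_castLE, bar.f_castLE_lt_f_castLE_iff] using hij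
  · simp [Prod.ext_iff, Fin.castLE_inj]
  · rintro ⟨a, b⟩ hcross
    simp only [Finset.mem_filter, Finset.mem_univ, true_and] at hcross
    obtain ⟨hab, hb, hf⟩ := hcross
    have hbn := bar.val_lt_of_lt_f_of_f_lt σ hb hf
    refine ⟨(⟨a, lt_trans hab hbn⟩, ⟨b, hbn⟩), ?_, rfl⟩
    simpa [← bar.f_castLE_lt_f_castLE_iff σ h] using ⟨hab, hf⟩
end
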